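/- arXiv:1506.02285 — 10 statements merged into one kernel-verified Lean document; each statement's English description precedes it below -/
import Mathlib

section
/- Let m, n ≥ 1, let t_0, …, t_{n−1} ∈ ℂ be pairwise distinct, and let s_0, …, s_{m−1} ∈ ℂ satisfy s_i ≠ t_j for all i, j. Set l(x) = ∏_{j=0}^{n−1}(x − t_j) and let l′ be its derivative. Then the n×n Vandermonde matrix V_t is invertible, l(s_i) ≠ 0 for all i, and C_{s,t} = diag(l(s_i)^{−1})_{i=0}^{m−1} · V_s · V_t^{−1} · diag(l′(t_j))_{j=0}^{n−1}, where V_s is the m×n Vandermonde matrix and C_{s,t} = (1/(s_i − t_j))_{0≤i<m, 0≤j<n} is the m×n Cauchy matrix. -/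
/-!
Write `l = ∏ⱼ (X - tⱼ)`, so that `l'(tₖ)⁻¹` is the barycentric weight of the node `tₖ`.
For `p < n` the polynomial `X ^ p` is its own Lagrange interpolant on the nodes `t`, and the
first barycentric form of that interpolant at a point `x` off the nodes is the partial fraction
expansion `x ^ p / l(x) = ∑ₖ tₖ ^ p / (l'(tₖ) (x - tₖ))`. Read entrywise, this says
`C_{s,t} · diag(l'(tⱼ)⁻¹) · V_t = diag(l(sᵢ)⁻¹) · V_s`; multiplying on the right by
`V_t⁻¹ · diag(l'(tⱼ))` gives the link.
-/

open Polynomial Matrix Finset Lagrange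

variable {K : Type*} [Field K]

theorem isUnit_vandermonde {n : ℕ} {t : Fin n → K} (ht : Function.Injective t) :
    IsUnit (vandermonde t) :=
  (isUnit_iff_isUnit_det _).2 (det_vandermonde_ne_zero_iff.2 ht).isUnit

section Barycentric

variable {ι : Type*} [DecidableEq ι] {s : Finset ι} {v : ι → K}

theorem nodalWeight_mul_eval_derivative_nodal (hvs : Set.InjOn v s) {i : ι} (hi : i ∈ s) :
    nodalWeight s v i * eval (v i) (derivative (nodal s v)) = 1 := by
  have hw := nodalWeight_ne_zero hvs hi
  rw [nodalWeight_eq_eval_derivative_nodal hi] at hw ⊢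
  exact inv_mul_cancel₀ (mt inv_eq_zero.2 hw)

theorem sum_nodalWeight_mul_inv_sub_mul_pow (hvs : Set.InjOn v s) {x : K}
    (hx : ∀ i ∈ s, x ≠ v i) {p : ℕ} (hp : p < #s) :
    ∑ i ∈ s, nodalWeight s v i * (x - v i)⁻¹ * v i ^ p =
      (eval x (nodal s v))⁻¹ * x ^ p := by
  have hdeg : (X ^ p : K[X]).degree < #s := by
    rw [degree_X_pow]
    exact_mod_cast hp
  have hinterp := eval_interpolate_not_at_node (fun i => eval (v i) (X ^ p)) hx
  rw [← eq_interpolate hvs hdeg] at hinterp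
  simp only [eval_pow, eval_X] at hinterp
  rw [eq_inv_mul_iff_mul_eq₀ (eval_nodal_not_at_node hx), hinterp]

end Barycentric

theorem cauchy_mul_diagonal_nodalWeight_mul_vandermonde {α : Type*} [Fintype α]
    [DecidableEq α] {n : ℕ} (s : α → K) {t : Fin n → K} (ht : Function.Injective t)
    (hst : ∀ i j, s i ≠ t j) :
    of (fun i j => (s i - t j)⁻¹) * diagonal (nodalWeight univ t) * vandermonde t =
      diagonal (fun i => (eval (s i) (nodal univ t))⁻¹) *
        of fun i (j : Fin n) => s i ^ (j : ℕ) := by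
  ext i j
  rw [mul_apply, diagonal_mul, of_apply]
  simp only [mul_diagonal, of_apply, vandermonde_apply]
  rw [← sum_nodalWeight_mul_inv_sub_mul_pow ht.injOn (fun k _ => hst i k) (by simp)]
  exact sum_congr rfl fun k _ => by ring

theorem cauchy_vandermonde_link_general (m n : ℕ)
    (t : Fin n → ℂ) (ht : Function.Injective t)
    (s : Fin m → ℂ) (hst : ∀ i j, s i ≠ t j)
    (l : Polynomial ℂ) (hl : l = ∏ j, (Polynomial.X - Polynomial.C (t j))) :
    IsUnit (Matrix.vandermonde t) ∧ (∀ i, l.eval (s i) ≠ 0) ∧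
      (Matrix.of fun (i : Fin m) (j : Fin n) => (s i - t j)⁻¹) =
        Matrix.diagonal (fun i => (l.eval (s i))⁻¹) *
          (Matrix.of fun (i : Fin m) (j : Fin n) => s i ^ (j : ℕ)) *
          (Matrix.vandermonde t)⁻¹ *
          Matrix.diagonal (fun j => (Polynomial.derivative l).eval (t j)) := by
  obtain rfl : l = nodal univ t := hl.trans (nodal_eq _ _).symm
  have hV := isUnit_vandermonde ht
  refine ⟨hV, fun i => eval_nodal_not_at_node fun j _ => hst i j, ?_⟩
  have hweights : diagonal (nodalWeight univ t) *
      diagonal (fun j => eval (t j) (derivative (nodal univ t))) = 1 := by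
    rw [diagonal_mul_diagonal, ← diagonal_one]
    exact congrArg diagonal <| funext fun j =>
      nodalWeight_mul_eval_derivative_nodal ht.injOn (mem_univ j)
  rw [← cauchy_mul_diagonal_nodalWeight_mul_vandermonde s ht hst,
    Matrix.mul_assoc _ (vandermonde t), mul_nonsing_inv _ ((isUnit_iff_isUnit_det _).1 hV),
    Matrix.mul_one, Matrix.mul_assoc, hweights, Matrix.mul_one]

/-- Equation (3.2) of the paper (Cauchy–Vandermonde link):
`C_{s,t} = diag(l(s_i)⁻¹) · V_s · V_t⁻¹ · diag(l'(t_j))`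
where `l(x) = ∏_j (x - t_j)`, the knots `t_j` are pairwise distinct and
`s_i ≠ t_j` for all `i, j`. -/
theorem cauchy_vandermonde_link (m n : ℕ) (hm : 1 ≤ m) (hn : 1 ≤ n)
    (t : Fin n → ℂ) (ht : Function.Injective t)
    (s : Fin m → ℂ) (hst : ∀ i j, s i ≠ t j)
    (l : Polynomial ℂ) (hl : l = ∏ j, (Polynomial.X - Polynomial.C (t j))) :
    IsUnit (Matrix.vandermonde t) ∧ (∀ i, l.eval (s i) ≠ 0) ∧
      (Matrix.of fun (i : Fin m) (j : Fin n) => (s i - t j)⁻¹) =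
        Matrix.diagonal (fun i => (l.eval (s i))⁻¹) *
          (Matrix.of fun (i : Fin m) (j : Fin n) => s i ^ (j : ℕ)) *
          (Matrix.vandermonde t)⁻¹ *
          Matrix.diagonal (fun j => (Polynomial.derivative l).eval (t j)) :=
  cauchy_vandermonde_link_general m n t ht s hst l hl
end

section
/- Let n ≥ 1, ω = exp(2π√−1/n), let t_0, …, t_{n−1} ∈ ℂ be pairwise distinct, and let e ∈ ℂ, e ≠ 0, satisfy eω^i ≠ t_j for all i, j. Set l(x) = ∏_{j=0}^{n−1}(x − t_j) with derivative l′, and C_{e,t} = (1/(eω^i − t_j))_{i,j=0}^{n−1}. Then the n×n Vandermonde matrix V_t is invertible, l′(t_j) ≠ 0 for all j, and V_t^{−1} = (1/√n) · diag(e^{−i})_{i=0}^{n−1} · Ω^H · diag(l(eω^i))_{i=0}^{n−1} · C_{e,t} · diag(1/l′(t_j))_{j=0}^{n−1}, where Ω^H = n^{−1/2}(ω^{−ij})_{i,j=0}^{n−1}. -/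
/-!
The columns of `V_t⁻¹` are the coefficient vectors of the Lagrange basis polynomials
`L_j = l / ((X - t_j) l'(t_j))`. Multiplying by the Vandermonde matrix `V_x` of the scaled roots
of unity `x_s = e ω^s` therefore gives the values `L_j(x_s) = l(x_s) / ((x_s - t_j) l'(t_j))`,
i.e. `diag(l(x_s)) C_{e,t} diag(1/l'(t_j))`. On the other hand `V_x = (ω^{sk}) diag(e^k)`, and
orthogonality of the characters `s ↦ ω^{ks}` gives `V_x⁻¹ = n⁻¹ diag(e^{-i}) (ω^{-ij})`.
Hence `V_t⁻¹ = V_x⁻¹ (V_x V_t⁻¹)` is the claimed factorization.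
-/

open Polynomial Finset

namespace Matrix

variable {R : Type*} [CommRing R] {n : ℕ}

theorem vandermonde_mul_coeff_eq_eval (v : Fin n → R) (p : Fin n → R[X])
    (hp : ∀ j, (p j).natDegree < n) :
    vandermonde v * of (fun (k j : Fin n) => (p j).coeff k) = of fun i j => (p j).eval (v i) := by
  ext i j
  rw [mul_apply, of_apply, eval_eq_sum_range' (hp j), ← Fin.sum_univ_eq_sum_range]
  simp only [vandermonde_apply, of_apply, mul_comm]

theorem vandermonde_const_mul_pow (e ω : R) :
    vandermonde (fun s : Fin n => e * ω ^ (s : ℕ)) =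
      (of fun s k : Fin n => ω ^ ((s : ℕ) * (k : ℕ))) *
        diagonal fun k : Fin n => e ^ (k : ℕ) := by
  ext s k
  rw [mul_diagonal, vandermonde_apply, of_apply, mul_pow, pow_mul, mul_comm]

end Matrix

namespace Lagrange

open Matrix

variable {K : Type*} [Field K] {n : ℕ} {t : Fin n → K}

theorem vandermonde_mul_coeff_basis (ht : Function.Injective t) (x : Fin n → K) :
    vandermonde x * of (fun (k j : Fin n) => (Lagrange.basis univ t j).coeff k) =
      of fun s j => (Lagrange.basis univ t j).eval (x s) := by
  refine vandermonde_mul_coeff_eq_eval x _ fun j => ?_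
  rw [natDegree_basis ht.injOn (mem_univ j), card_univ, Fintype.card_fin]
  exact Nat.sub_lt (Fin.pos j) one_pos

theorem inv_vandermonde_eq_coeff_basis (ht : Function.Injective t) :
    (vandermonde t)⁻¹ = of fun (k j : Fin n) => (Lagrange.basis univ t j).coeff k := by
  refine inv_eq_right_inv ?_
  rw [vandermonde_mul_coeff_basis ht]
  ext i j
  rw [of_apply, one_apply]
  split_ifs with hij
  · exact hij ▸ eval_basis_self ht.injOn (mem_univ i)
  · exact eval_basis_of_ne (Ne.symm hij) (mem_univ i)

theorem of_eval_basis_eq_diagonal_mul_cauchy_mul_diagonal {m : Type*} [Fintype m]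
    [DecidableEq m] (x : m → K) (hx : ∀ s j, x s ≠ t j) :
    (of fun s j => (Lagrange.basis univ t j).eval (x s)) =
      diagonal (fun s => (nodal univ t).eval (x s)) * of (fun s j => (x s - t j)⁻¹) *
        diagonal fun j => ((nodal univ t).derivative.eval (t j))⁻¹ := by
  ext s j
  rw [mul_diagonal, diagonal_mul, of_apply, of_apply,
    eval_basis_not_at_node (mem_univ j) (hx s j), nodalWeight_eq_eval_derivative_nodal (mem_univ j)]
  ring

end Lagrange

namespace IsPrimitiveRoot

open Matrix

variable {K : Type*} [Field K] {n : ℕ} {ω : K}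

theorem sum_range_zpow_pow (hω : IsPrimitiveRoot ω n) (a : ℤ) :
    ∑ s ∈ range n, (ω ^ a) ^ s = if (n : ℤ) ∣ a then (n : K) else 0 := by
  split_ifs with ha
  · simp [(hω.zpow_eq_one_iff_dvd a).2 ha]
  · have hne : ω ^ a ≠ 1 := mt (hω.zpow_eq_one_iff_dvd a).1 ha
    have hpow : (ω ^ a) ^ n = 1 := by
      rw [← zpow_natCast, ← _root_.zpow_mul, mul_comm, _root_.zpow_mul, zpow_natCast,
        hω.pow_eq_one, _root_.one_zpow]
    rw [geom_sum_eq hne, hpow, sub_self, zero_div]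

theorem of_zpow_neg_mul_mul_of_pow_mul (hω : IsPrimitiveRoot ω n) :
    (of fun i j : Fin n => ω ^ (-((i : ℕ) * (j : ℕ)) : ℤ)) *
        (of fun i j : Fin n => ω ^ ((i : ℕ) * (j : ℕ))) = (n : K) • 1 := by
  ext i k
  have hterm : ∀ s : Fin n, ω ^ (-((i : ℕ) * (s : ℕ)) : ℤ) * ω ^ ((s : ℕ) * (k : ℕ))
      = (ω ^ ((k : ℤ) - i)) ^ (s : ℕ) := fun s => by
    rw [← zpow_natCast, ← zpow_natCast, ← zpow_add₀ (hω.ne_zero (Fin.pos i).ne'),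
      ← _root_.zpow_mul]
    push_cast
    ring_nf
  have hdvd : (n : ℤ) ∣ (k : ℤ) - i ↔ i = k := by
    rw [← Int.modEq_iff_dvd, Int.natCast_modEq_iff, Fin.ext_iff]
    exact ⟨fun h => h.eq_of_lt_of_lt i.isLt k.isLt, fun h => h ▸ rfl⟩
  simp only [mul_apply, of_apply, hterm,
    Fin.sum_univ_eq_sum_range (fun s => (ω ^ ((k : ℤ) - i)) ^ s), hω.sum_range_zpow_pow,
    Matrix.smul_apply, one_apply, hdvd, smul_eq_mul, mul_ite, mul_one, mul_zero]

theorem inv_dft_mul_vandermonde_const_mul_pow [NeZero n] (hω : IsPrimitiveRoot ω n) {e : K}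
    (he : e ≠ 0) :
    ((n : K)⁻¹ • (diagonal (fun i : Fin n => e ^ (-(i : ℕ) : ℤ)) *
        of fun i j : Fin n => ω ^ (-((i : ℕ) * (j : ℕ)) : ℤ))) *
      vandermonde (fun s : Fin n => e * ω ^ (s : ℕ)) = 1 := by
  have hn : (n : K) ≠ 0 := hω.neZero'.out
  rw [vandermonde_const_mul_pow, Matrix.smul_mul, Matrix.mul_assoc, ← Matrix.mul_assoc (of _),
    hω.of_zpow_neg_mul_mul_of_pow_mul, Matrix.smul_mul, Matrix.one_mul, Matrix.mul_smul,
    diagonal_mul_diagonal, smul_smul, inv_mul_cancel₀ hn, one_smul]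
  convert diagonal_one with i
  rw [_root_.zpow_neg, zpow_natCast, inv_mul_cancel₀ (pow_ne_zero _ he)]

end IsPrimitiveRoot

open Matrix Lagrange in
/-- Equation (3.4) of the paper: the inverse of the `n × n` Vandermonde matrix
`V_t` is expressed through a CVᵀ-type Cauchy matrix `C_{e,t} = (1/(e ω^i - t_j))`
and the inverse DFT matrix `Ω^H = n^{-1/2}(ω^{-ij})`:
`V_t⁻¹ = (1/√n) · diag(e^{-i}) · Ω^H · diag(l(e ω^i)) · C_{e,t} · diag(1/l'(t_j))`
where `l(x) = ∏_j (x - t_j)`. -/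
theorem vandermonde_inv_eq_cv_factorization (n : ℕ) (hn : 1 ≤ n)
    (ω : ℂ) (hω : ω = Complex.exp (2 * Real.pi * Complex.I / n))
    (t : Fin n → ℂ) (ht : Function.Injective t)
    (e : ℂ) (he : e ≠ 0) (het : ∀ i j : Fin n, e * ω ^ (i : ℕ) ≠ t j)
    (l : Polynomial ℂ) (hl : l = ∏ j, (Polynomial.X - Polynomial.C (t j))) :
    IsUnit (Matrix.vandermonde t) ∧
      (∀ j, (Polynomial.derivative l).eval (t j) ≠ 0) ∧
      (Matrix.vandermonde t)⁻¹ =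
        ((Real.sqrt n : ℂ))⁻¹ •
          (Matrix.diagonal (fun i : Fin n => e ^ (-(i : ℕ) : ℤ)) *
            (Matrix.of fun (i j : Fin n) =>
              ω ^ (-((i : ℕ) * (j : ℕ)) : ℤ) / (Real.sqrt n : ℂ)) *
            Matrix.diagonal (fun i : Fin n => l.eval (e * ω ^ (i : ℕ))) *
            (Matrix.of fun (i j : Fin n) => (e * ω ^ (i : ℕ) - t j)⁻¹) *
            Matrix.diagonal (fun j : Fin n => ((Polynomial.derivative l).eval (t j))⁻¹)) := by
  have : NeZero n := ⟨by omega⟩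
  have hprim : IsPrimitiveRoot ω n := hω ▸ Complex.isPrimitiveRoot_exp n (NeZero.ne n)
  rw [← nodal_eq] at hl
  subst hl
  refine ⟨(isUnit_iff_isUnit_det _).2 (det_vandermonde_ne_zero_iff.2 ht).isUnit,
    fun j => ?_, ?_⟩
  · have hw := nodalWeight_ne_zero ht.injOn (mem_univ j)
    rwa [nodalWeight_eq_eval_derivative_nodal (mem_univ j), Ne, inv_eq_zero] at hw
  have hsqrt : ((Real.sqrt n : ℂ))⁻¹ * ((Real.sqrt n : ℂ))⁻¹ = (n : ℂ)⁻¹ := by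
    rw [← mul_inv, ← Complex.ofReal_mul, Real.mul_self_sqrt n.cast_nonneg,
      Complex.ofReal_natCast]
  have hscale :
      (of fun i j : Fin n => ω ^ (-((i : ℕ) * (j : ℕ)) : ℤ) / (Real.sqrt n : ℂ)) =
        ((Real.sqrt n : ℂ))⁻¹ •
          of fun i j : Fin n => ω ^ (-((i : ℕ) * (j : ℕ)) : ℤ) := by
    ext i j
    simp only [of_apply, Matrix.smul_apply, smul_eq_mul, div_eq_inv_mul]
  calc (vandermonde t)⁻¹
      = ((n : ℂ)⁻¹ • (diagonal (fun i : Fin n => e ^ (-(i : ℕ) : ℤ)) *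
          of fun i j : Fin n => ω ^ (-((i : ℕ) * (j : ℕ)) : ℤ))) *
          (vandermonde (fun s : Fin n => e * ω ^ (s : ℕ)) * (vandermonde t)⁻¹) := by
        rw [← Matrix.mul_assoc, hprim.inv_dft_mul_vandermonde_const_mul_pow he, Matrix.one_mul]
    _ = _ := by
        rw [inv_vandermonde_eq_coeff_basis ht, vandermonde_mul_coeff_basis ht,
          of_eval_basis_eq_diagonal_mul_cauchy_mul_diagonal _ het, hscale]
        simp only [Matrix.mul_assoc, Matrix.smul_mul, Matrix.mul_smul, smul_smul, hsqrt]
end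

section
/- Let n ≥ 1, ω = exp(2π√−1/n), let s_0, …, s_{n−1} ∈ ℂ be pairwise distinct, and let f ∈ ℂ, f ≠ 0, satisfy s_i^n ≠ f^n for all i. Then the n×n CV matrix C_{s,f} = (1/(s_i − fω^j))_{i,j=0}^{n−1} and the n×n Vandermonde matrix V_s are both invertible, and V_s^{−1} = √n · diag(f^{−j})_{j=0}^{n−1} · Ω^H · diag(ω^{−j})_{j=0}^{n−1} · C_{s,f}^{−1} · diag(f^{n−1}/(s_i^n − f^n))_{i=0}^{n−1}, where Ω^H = n^{−1/2}(ω^{−ij})_{i,j=0}^{n−1}. -/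
/-!
If every node `t_j` is an `n`-th root of the same `c`, the geometric sum
`(s - t) ∑_{k<n} s^k t^(n-1-k) = s^n - c` factors the Cauchy-type matrix `(1/(s_i - t_j))` as
`diag(1/(s_i^n - c)) · V_s · (t_j^(n-1-k))_{k,j}`. For `t_j = f ω^j` the last factor is
`f^(n-1) · diag(f^(-k)) · (ω^(-kj)) · diag(ω^(-j))`, because `ω^n = 1`; all factors other than
`V_s` are invertible, and inverting the factorization gives the formula for `V_s⁻¹`.
-/

open Matrix

variable {K : Type*} [Field K]

theorem Matrix.of_inv_sub_eq_diagonal_mul_vandermonde_mul {n m : ℕ} (s : Fin n → K)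
    (t : Fin m → K) {c : K} (ht : ∀ j, t j ^ n = c) (hs : ∀ i, s i ^ n ≠ c) :
    of (fun i j => (s i - t j)⁻¹) =
      diagonal (fun i => (s i ^ n - c)⁻¹) * vandermonde s *
        of (fun (k : Fin n) j => t j ^ (n - 1 - (k : ℕ))) := by
  ext i j
  have hsc : s i ^ n - c ≠ 0 := sub_ne_zero.mpr (hs i)
  have hst : s i - t j ≠ 0 := sub_ne_zero.mpr fun h => hs i (h ▸ ht j)
  have hgeom := geom_sum₂_mul (s i) (t j) n
  rw [ht j, ← Fin.sum_univ_eq_sum_range (fun k => s i ^ k * t j ^ (n - 1 - k))] at hgeom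
  rw [of_apply, mul_apply]
  simp only [diagonal_mul, vandermonde_apply, of_apply, mul_assoc, ← Finset.mul_sum,
    eq_div_of_mul_eq hst hgeom]
  field_simp

theorem mul_pow_sub_one_sub_eq_zpow {ω : K} {n k : ℕ} (hω : ω ^ n = 1) (hk : k < n) {f : K}
    (hf : f ≠ 0) (j : ℕ) :
    (f * ω ^ j) ^ (n - 1 - k) =
      f ^ (n - 1) * (f ^ (-(k : ℤ)) * ω ^ (-((k * j : ℕ) : ℤ)) * ω ^ (-(j : ℤ))) := by
  obtain ⟨m, rfl⟩ : ∃ m, n = m + k + 1 := ⟨n - k - 1, by omega⟩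
  have hω0 : ω ≠ 0 := by rintro rfl; simp at hω
  simp only [_root_.zpow_neg, zpow_natCast, add_tsub_cancel_right]
  field_simp
  linear_combination f ^ (m + k) * congrArg (· ^ j) hω

theorem Matrix.of_pow_sub_one_sub_eq_smul {ω : K} {n : ℕ} (hω : ω ^ n = 1) {f : K}
    (hf : f ≠ 0) :
    of (fun (k j : Fin n) => (f * ω ^ (j : ℕ)) ^ (n - 1 - (k : ℕ))) =
      f ^ (n - 1) • (diagonal (fun k : Fin n => f ^ (-(k : ℕ) : ℤ)) *
        of (fun (k j : Fin n) => ω ^ (-((k : ℕ) * (j : ℕ)) : ℤ)) *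
        diagonal (fun j : Fin n => ω ^ (-(j : ℕ) : ℤ))) := by
  ext k j
  simp only [of_apply, smul_apply, mul_diagonal, diagonal_mul, smul_eq_mul]
  exact_mod_cast mul_pow_sub_one_sub_eq_zpow hω k.isLt hf j

theorem IsPrimitiveRoot.isUnit_matrix_of_zpow_neg_mul {ω : K} {n : ℕ}
    (hω : IsPrimitiveRoot ω n) :
    IsUnit (of (fun (i j : Fin n) => ω ^ (-((i : ℕ) * (j : ℕ)) : ℤ))) := by
  have hinj : Function.Injective (fun i : Fin n => ω⁻¹ ^ (i : ℕ)) :=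
    fun a b h => Fin.ext (hω.inv.pow_inj a.isLt b.isLt h)
  have hV : of (fun (i j : Fin n) => ω ^ (-((i : ℕ) * (j : ℕ)) : ℤ)) =
      vandermonde (fun i : Fin n => ω⁻¹ ^ (i : ℕ)) := by
    ext i j
    simp only [_root_.zpow_neg, of_apply, inv_pow, vandermonde_apply, ← pow_mul, _root_.inv_inj]
    norm_cast
  rw [hV, isUnit_iff_isUnit_det, isUnit_iff_ne_zero]
  exact det_vandermonde_ne_zero_iff.mpr hinj

theorem Matrix.inv_eq_mul_inv_mul_of_eq_mul_mul {ι R : Type*} [Fintype ι] [DecidableEq ι]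
    [CommRing R] {A B C V : Matrix ι ι R} (h : C = A * V * B) (hA : IsUnit A)
    (hB : IsUnit B) :
    V⁻¹ = B * C⁻¹ * A := by
  rw [isUnit_iff_isUnit_det] at hA hB
  rw [h, Matrix.mul_inv_rev, Matrix.mul_inv_rev, ← Matrix.mul_assoc, mul_nonsing_inv _ hB,
    Matrix.one_mul, nonsing_inv_mul_cancel_right _ _ hA]

/-- Equation (3.5) of the paper: the inverse of the `n × n` Vandermonde matrix
`V_s` is expressed through the inverse of the CV matrix
`C_{s,f} = (1/(s_i - f ω^j))` and the inverse DFT matrix `Ω^H = n^{-1/2}(ω^{-ij})`: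
`V_s⁻¹ = √n · diag(f^{-j}) · Ω^H · diag(ω^{-j}) · C_{s,f}⁻¹ · diag(f^{n-1}/(s_i^n - f^n))`. -/
theorem vandermonde_inv_eq_cv_inv_factorization (n : ℕ) (hn : 1 ≤ n)
    (ω : ℂ) (hω : ω = Complex.exp (2 * Real.pi * Complex.I / n))
    (s : Fin n → ℂ) (hs : Function.Injective s)
    (f : ℂ) (hf : f ≠ 0) (hsf : ∀ i, s i ^ n ≠ f ^ n) :
    IsUnit (Matrix.of fun (i j : Fin n) => (s i - f * ω ^ (j : ℕ))⁻¹) ∧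
      IsUnit (Matrix.vandermonde s) ∧
      (Matrix.vandermonde s)⁻¹ =
        (Real.sqrt n : ℂ) •
          (Matrix.diagonal (fun j : Fin n => f ^ (-(j : ℕ) : ℤ)) *
            (Matrix.of fun (i j : Fin n) =>
              ω ^ (-((i : ℕ) * (j : ℕ)) : ℤ) / (Real.sqrt n : ℂ)) *
            Matrix.diagonal (fun j : Fin n => ω ^ (-(j : ℕ) : ℤ)) *
            (Matrix.of fun (i j : Fin n) => (s i - f * ω ^ (j : ℕ))⁻¹)⁻¹ *
            Matrix.diagonal (fun i : Fin n => f ^ (n - 1) / (s i ^ n - f ^ n))) := by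
  have hprim : IsPrimitiveRoot ω n := hω ▸ Complex.isPrimitiveRoot_exp n (by omega)
  set F := of fun (i j : Fin n) => ω ^ (-((i : ℕ) * (j : ℕ)) : ℤ)
  set B := diagonal (fun j : Fin n => f ^ (-(j : ℕ) : ℤ)) * F *
    diagonal (fun j : Fin n => ω ^ (-(j : ℕ) : ℤ))
  set D := diagonal fun i : Fin n => f ^ (n - 1) / (s i ^ n - f ^ n)
  have hfactor : of (fun (i j : Fin n) => (s i - f * ω ^ (j : ℕ))⁻¹) =
      D * vandermonde s * B := by
    have hroot (j : Fin n) : (f * ω ^ (j : ℕ)) ^ n = f ^ n := by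
      rw [mul_pow, ← pow_mul, pow_mul', hprim.pow_eq_one, one_pow, mul_one]
    rw [of_inv_sub_eq_diagonal_mul_vandermonde_mul s _ hroot hsf,
      of_pow_sub_one_sub_eq_smul hprim.pow_eq_one hf, Matrix.mul_smul, ← Matrix.smul_mul,
      ← Matrix.smul_mul, ← diagonal_smul]
    simp_rw [Pi.smul_def, smul_eq_mul, ← div_eq_mul_inv]
    rfl
  have hB : IsUnit B :=
    ((isUnit_diagonal.mpr (Pi.isUnit_iff.mpr fun _ => (zpow_ne_zero _ hf).isUnit)).mul
      hprim.isUnit_matrix_of_zpow_neg_mul).mul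
      (isUnit_diagonal.mpr (Pi.isUnit_iff.mpr fun _ =>
        (zpow_ne_zero _ (hprim.ne_zero (by omega))).isUnit))
  have hD : IsUnit D := isUnit_diagonal.mpr (Pi.isUnit_iff.mpr fun i =>
    (div_ne_zero (pow_ne_zero _ hf) (sub_ne_zero.mpr (hsf i))).isUnit)
  have hV : IsUnit (vandermonde s) :=
    (isUnit_iff_isUnit_det _).mpr (det_vandermonde_ne_zero_iff.mpr hs).isUnit
  have hsqrt : (Real.sqrt n : ℂ) ≠ 0 := by simp; omega
  have hDFT : (of fun (i j : Fin n) => ω ^ (-((i : ℕ) * (j : ℕ)) : ℤ) / (Real.sqrt n : ℂ)) =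
      (Real.sqrt n : ℂ)⁻¹ • F := by
    ext i j
    simp [F, div_eq_inv_mul]
  refine ⟨hfactor ▸ (hD.mul hV).mul hB, hV, ?_⟩
  rw [inv_eq_mul_inv_mul_of_eq_mul_mul hfactor hD hB, hDFT]
  simp only [Matrix.mul_smul, Matrix.smul_mul, smul_smul, mul_inv_cancel₀ hsqrt, one_smul, B]
end

section
/- Let θ be a real number with 0 < θ < 1, let c ∈ ℂ, and let s_0, …, s_{m−1}, t_0, …, t_{n−1} ∈ ℂ satisfy |t_j − c| ≤ θ·|s_i − c| for all i, j, and set δ = min_{0≤i<m} |s_i − c| and assume δ > 0. Fix a positive integer ρ and define the m×ρ matrix F = (1/(s_i − c)^{ν+1})_{0≤i<m, 0≤ν<ρ} and the n×ρ matrix G = ((t_j − c)^ν)_{0≤j<n, 0≤ν<ρ}. Then s_i ≠ t_j for all i, j, so the m×n Cauchy matrix C = (1/(s_i − t_j)) is well defined, and every entry of E = C − F·G^T satisfies |E_{ij}| ≤ θ^ρ/((1 − θ)·δ); in particular |E| = max_{i,j}|E_{ij}| ≤ θ^ρ/((1 − θ)·δ) and rank(F·G^T) ≤ ρ. -/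
open Finset

/-! Expanding `1/(s - t) = 1/((s - c) - (t - c))` as a geometric series in `(t - c)/(s - c)`
gives `F Gᵀ` as the `ρ`-th partial sum. The tail is exactly `((t - c)/(s - c))^ρ/(s - t)`, whose
norm is at most `θ^ρ/((1 - θ)δ)` because `|s - t| ≥ (1 - θ)|s - c| ≥ (1 - θ)δ`. -/

theorem inv_sub_sub_sum_range_eq {K : Type*} [Field K] {x y : K} (hy : y ≠ 0) (hyx : y - x ≠ 0)
    (ρ : ℕ) :
    (y - x)⁻¹ - ∑ ν ∈ range ρ, (y ^ (ν + 1))⁻¹ * x ^ ν = (x / y) ^ ρ / (y - x) := by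
  induction ρ with
  | zero => simp
  | succ ρ ih =>
    rw [sum_range_succ, ← sub_sub, ih, div_pow, div_pow]
    field_simp
    ring

section NormedField

variable {K : Type*} [NormedField K] {x y : K} {θ : ℝ}

theorem mul_norm_le_norm_sub (hxy : ‖x‖ ≤ θ * ‖y‖) : (1 - θ) * ‖y‖ ≤ ‖y - x‖ := by
  have := norm_sub_norm_le y x
  linarith

theorem sub_ne_zero_of_norm_le_mul (hθ : θ < 1) (hy : y ≠ 0) (hxy : ‖x‖ ≤ θ * ‖y‖) :
    y - x ≠ 0 := by
  rw [← norm_pos_iff] at hy ⊢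
  nlinarith [mul_norm_le_norm_sub hxy]

theorem norm_inv_sub_sub_sum_range_le {δ : ℝ} (hθ : θ < 1) (hδ : 0 < δ) (hy : δ ≤ ‖y‖)
    (hxy : ‖x‖ ≤ θ * ‖y‖) (ρ : ℕ) :
    ‖(y - x)⁻¹ - ∑ ν ∈ range ρ, (y ^ (ν + 1))⁻¹ * x ^ ν‖ ≤ θ ^ ρ / ((1 - θ) * δ) := by
  have hy0 : 0 < ‖y‖ := hδ.trans_le hy
  have hθ0 : 0 ≤ θ := nonneg_of_mul_nonneg_left ((norm_nonneg x).trans hxy) hy0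
  have hratio : ‖x / y‖ ≤ θ := by rwa [norm_div, div_le_iff₀ hy0]
  have hgap : (1 - θ) * δ ≤ ‖y - x‖ :=
    (mul_le_mul_of_nonneg_left hy (by linarith)).trans (mul_norm_le_norm_sub hxy)
  rw [inv_sub_sub_sum_range_eq (norm_pos_iff.mp hy0) (sub_ne_zero_of_norm_le_mul hθ
    (norm_pos_iff.mp hy0) hxy), norm_div, norm_pow]
  exact div_le_div₀ (by positivity) (pow_le_pow_left₀ (norm_nonneg _) hratio ρ)
    (mul_pos (by linarith) hδ) hgap

end NormedField

theorem cauchy_low_rank_approximation_general (m n : ℕ)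
    (θ : ℝ) (hθ1 : θ < 1) (c : ℂ)
    (s : Fin m → ℂ) (t : Fin n → ℂ)
    (hsep : ∀ i j, ‖t j - c‖ ≤ θ * ‖s i - c‖)
    (δ : ℝ) (hδ : δ = ⨅ i, ‖s i - c‖) (hδpos : 0 < δ)
    (ρ : ℕ)
    (F : Matrix (Fin m) (Fin ρ) ℂ)
    (hF : F = Matrix.of fun (i : Fin m) (ν : Fin ρ) => ((s i - c) ^ ((ν : ℕ) + 1))⁻¹)
    (G : Matrix (Fin n) (Fin ρ) ℂ)
    (hG : G = Matrix.of fun (j : Fin n) (ν : Fin ρ) => (t j - c) ^ (ν : ℕ)) :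
    (∀ i j, s i ≠ t j) ∧
      (∀ i j, ‖(s i - t j)⁻¹ - (F * G.transpose) i j‖ ≤
        θ ^ ρ / ((1 - θ) * δ)) ∧
      (F * G.transpose).rank ≤ ρ := by
  have hδle (i : Fin m) : δ ≤ ‖s i - c‖ := hδ ▸ ciInf_le (Set.finite_range _).bddBelow i
  have hsc (i : Fin m) : s i - c ≠ 0 := norm_pos_iff.mp (hδpos.trans_le (hδle i))
  have hentry (i j) : (F * G.transpose) i j
      = ∑ ν ∈ range ρ, ((s i - c) ^ (ν + 1))⁻¹ * (t j - c) ^ ν := by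
    subst hF hG
    simp only [Matrix.mul_apply, Matrix.of_apply, Matrix.transpose_apply]
    exact Fin.sum_univ_eq_sum_range (fun ν => ((s i - c) ^ (ν + 1))⁻¹ * (t j - c) ^ ν) ρ
  refine ⟨fun i j => ?_, fun i j => ?_, ?_⟩
  · simpa [sub_eq_zero] using sub_ne_zero_of_norm_le_mul hθ1 (hsc i) (hsep i j)
  · rw [hentry, ← sub_sub_sub_cancel_right (s i) (t j) c]
    exact norm_inv_sub_sub_sum_range_le hθ1 hδpos (hδle i) (hsep i j) ρ
  · exact (Matrix.rank_mul_le_left F G.transpose).trans (by simpa using F.rank_le_card_width)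

/-- Corollary 7.1 of the paper: a Cauchy matrix `C = (1/(s_i - t_j))` with
`(θ, c)`-separated knot sets admits the explicit rank-`ρ` approximation
`F·Gᵀ`, `F = (1/(s_i - c)^{ν+1})`, `G = ((t_j - c)^ν)`, with entrywise error
at most `θ^ρ/((1 - θ)δ)`, where `δ = min_i |s_i - c| > 0`. -/
theorem cauchy_low_rank_approximation (m n : ℕ) (hm : 1 ≤ m) (hn : 1 ≤ n)
    (θ : ℝ) (hθ0 : 0 < θ) (hθ1 : θ < 1) (c : ℂ)
    (s : Fin m → ℂ) (t : Fin n → ℂ)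
    (hsep : ∀ i j, ‖t j - c‖ ≤ θ * ‖s i - c‖)
    (δ : ℝ) (hδ : δ = ⨅ i, ‖s i - c‖) (hδpos : 0 < δ)
    (ρ : ℕ) (hρ : 1 ≤ ρ)
    (F : Matrix (Fin m) (Fin ρ) ℂ)
    (hF : F = Matrix.of fun (i : Fin m) (ν : Fin ρ) => ((s i - c) ^ ((ν : ℕ) + 1))⁻¹)
    (G : Matrix (Fin n) (Fin ρ) ℂ)
    (hG : G = Matrix.of fun (j : Fin n) (ν : Fin ρ) => (t j - c) ^ (ν : ℕ)) :
    (∀ i j, s i ≠ t j) ∧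
      (∀ i j, ‖(s i - t j)⁻¹ - (F * G.transpose) i j‖ ≤
        θ ^ ρ / ((1 - θ) * δ)) ∧
      (F * G.transpose).rank ≤ ρ :=
  cauchy_low_rank_approximation_general m n θ hθ1 c s t hsep δ hδ hδpos ρ F hF G hG
end

section
/- Let χ, η, χ′ be real numbers with 0 ≤ χ ≤ η < χ′ ≤ π/2, set c = exp(η√−1), and let Γ(χ, χ′) = { r·exp(ψ√−1) : r ≥ 0, χ ≤ ψ < χ′ } be the semi-open sector and Γ̄(χ, χ′) = ℂ \ Γ(χ, χ′) its exterior. Then the distance from c to Γ̄(χ, χ′), namely inf_{z ∈ Γ̄(χ, χ′)} |c − z|, is equal to sin(ψ_0) where ψ_0 = min{η − χ, χ′ − η}. -/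
/-!
Rotating by `e^{-θi}` turns `Im (e^{-θi} z)` into the signed distance from `z` to the line
through `0` in direction `e^{θi}`, a 1-Lipschitz function of `z`. On the sector `Γ(χ, χ')` it is
`≥ 0` for `θ = χ` and `≤ 0` for `θ = χ'`, and at `c = e^{ηi}` it equals `sin (η - χ)`,
resp. `-sin (χ' - η)`. Pushing `c` perpendicularly across either bounding line by slightly more
than that value leaves the sector, which bounds the distance from above. Conversely, a point `z`
closer to `c` than `ψ₀` has `Im (e^{-χi} z) > 0`, `Im (e^{-χ'i} z) < 0` and `Re z > 0` (as
`sin ψ₀ ≤ cos η`), and these three conditions pin `arg z` inside `[χ, χ')`.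
-/

open Complex Metric
open scoped Real

lemma Metric.infDist_compl_le_of_forall_add_smul_notMem {E : Type*} [NormedAddCommGroup E]
    [NormedSpace ℝ E] {s : Set E} {x v : E} {a : ℝ} (hv : ‖v‖ = 1) (ha : 0 ≤ a)
    (h : ∀ t > a, x + t • v ∉ s) : infDist x sᶜ ≤ a := by
  refine le_of_forall_gt_imp_ge_of_dense fun t ht => ?_
  calc infDist x sᶜ ≤ dist x (x + t • v) := infDist_le_dist_of_mem (h t ht)
    _ = t := by
      rw [dist_self_add_right, norm_smul, hv, mul_one, Real.norm_of_nonneg (by linarith)]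

namespace Complex

lemma exp_neg_mul_I_mul_exp_mul_I (θ ψ : ℝ) :
    exp (-θ * I) * exp (ψ * I) = exp ((ψ - θ : ℝ) * I) := by
  rw [← exp_add]; push_cast; ring_nf

lemma im_exp_neg_mul_I_mul_exp_mul_I (θ ψ : ℝ) :
    (exp (-θ * I) * exp (ψ * I)).im = Real.sin (ψ - θ) := by
  rw [exp_neg_mul_I_mul_exp_mul_I, exp_ofReal_mul_I_im]

lemma im_exp_neg_mul_I_mul_polar (θ r ψ : ℝ) :
    (exp (-θ * I) * (r * exp (ψ * I))).im = r * Real.sin (ψ - θ) := by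
  rw [mul_left_comm, im_ofReal_mul, im_exp_neg_mul_I_mul_exp_mul_I]

lemma im_exp_neg_mul_I_mul_add (θ t : ℝ) (z : ℂ) :
    (exp (-θ * I) * (z + t * (I * exp (θ * I)))).im = (exp (-θ * I) * z).im + t := by
  have hunit : exp (-θ * I) * exp (θ * I) = 1 := by
    rw [exp_neg_mul_I_mul_exp_mul_I, sub_self, ofReal_zero, zero_mul, exp_zero]
  rw [mul_add, mul_left_comm, mul_left_comm _ I, hunit, add_im]
  simp

lemma abs_im_exp_neg_mul_I_mul_sub_le (θ : ℝ) (z w : ℂ) :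
    |(exp (-θ * I) * z).im - (exp (-θ * I) * w).im| ≤ dist z w := by
  have hnorm : ‖exp (-θ * I)‖ = 1 := by
    rw [show -(θ : ℂ) * I = (-θ : ℝ) * I by push_cast; ring, norm_exp_ofReal_mul_I]
  calc |(exp (-θ * I) * z).im - (exp (-θ * I) * w).im|
      = |(exp (-θ * I) * (z - w)).im| := by rw [mul_sub, sub_im]
    _ ≤ ‖exp (-θ * I) * (z - w)‖ := abs_im_le_norm _
    _ = dist z w := by rw [norm_mul, hnorm, one_mul, dist_eq]

end Complex

def sector (χ χ' : ℝ) : Set ℂ :=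
  {z | ∃ r : ℝ, 0 ≤ r ∧ ∃ ψ : ℝ, χ ≤ ψ ∧ ψ < χ' ∧ z = r * exp (ψ * I)}

section Sector

variable {χ χ' : ℝ} {z : ℂ}

lemma im_exp_neg_mul_I_mul_nonneg_of_mem_sector (h : χ' ≤ χ + π) (hz : z ∈ sector χ χ') :
    0 ≤ (exp (-χ * I) * z).im := by
  obtain ⟨r, hr, ψ, hχψ, hψχ', rfl⟩ := hz
  rw [im_exp_neg_mul_I_mul_polar]
  exact mul_nonneg hr (Real.sin_nonneg_of_nonneg_of_le_pi (by linarith) (by linarith))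

lemma im_exp_neg_mul_I_mul_nonpos_of_mem_sector (h : χ' ≤ χ + π) (hz : z ∈ sector χ χ') :
    (exp (-χ' * I) * z).im ≤ 0 := by
  obtain ⟨r, hr, ψ, hχψ, hψχ', rfl⟩ := hz
  rw [im_exp_neg_mul_I_mul_polar]
  exact mul_nonpos_of_nonneg_of_nonpos hr
    (Real.sin_nonpos_of_nonpos_of_neg_pi_le (by linarith) (by linarith))

lemma mem_sector_of_re_pos (hχ : -(π / 2) ≤ χ) (hχχ' : χ ≤ χ') (hχ' : χ' ≤ π / 2)
    (hre : 0 < z.re) (hχz : 0 < (exp (-χ * I) * z).im) (hχ'z : (exp (-χ' * I) * z).im < 0) :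
    z ∈ sector χ χ' := by
  have hpolar := norm_mul_exp_arg_mul_I z
  have harg := abs_lt.mp (abs_arg_lt_pi_div_two_iff.mpr (Or.inl hre))
  rw [← hpolar, im_exp_neg_mul_I_mul_polar] at hχz hχ'z
  have hsinχ := pos_of_mul_pos_right hχz (norm_nonneg z)
  have hsinχ' := neg_of_mul_neg_right hχ'z (norm_nonneg z)
  refine ⟨‖z‖, norm_nonneg z, z.arg, ?_, ?_, hpolar.symm⟩
  · by_contra! hlt
    linarith [Real.sin_neg_of_neg_of_neg_pi_lt (sub_neg.mpr hlt) (by linarith)]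
  · by_contra! hle
    linarith [Real.sin_nonneg_of_nonneg_of_le_pi (sub_nonneg.mpr hle) (by linarith)]

variable {η : ℝ}

lemma infDist_exp_mul_I_compl_sector_le_sin_sub_left (h : χ' ≤ χ + π) (hχη : χ ≤ η)
    (hη : η ≤ χ + π) : infDist (exp (η * I)) (sector χ χ')ᶜ ≤ Real.sin (η - χ) := by
  refine infDist_compl_le_of_forall_add_smul_notMem (v := -(I * exp (χ * I)))
    (by simp [norm_exp_ofReal_mul_I])
    (Real.sin_nonneg_of_nonneg_of_le_pi (by linarith) (by linarith)) fun t ht hmem => ?_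
  have hshift : exp (η * I) + t • -(I * exp (χ * I)) =
      exp (η * I) + (-t : ℝ) * (I * exp (χ * I)) := by
    rw [real_smul]; push_cast; ring
  have him := im_exp_neg_mul_I_mul_nonneg_of_mem_sector h hmem
  rw [hshift, im_exp_neg_mul_I_mul_add, im_exp_neg_mul_I_mul_exp_mul_I] at him
  linarith

lemma infDist_exp_mul_I_compl_sector_le_sin_sub_right (h : χ' ≤ χ + π) (hηχ' : η ≤ χ')
    (hη : χ' ≤ η + π) : infDist (exp (η * I)) (sector χ χ')ᶜ ≤ Real.sin (χ' - η) := by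
  refine infDist_compl_le_of_forall_add_smul_notMem (v := I * exp (χ' * I))
    (by simp [norm_exp_ofReal_mul_I])
    (Real.sin_nonneg_of_nonneg_of_le_pi (by linarith) (by linarith)) fun t ht hmem => ?_
  have him := im_exp_neg_mul_I_mul_nonpos_of_mem_sector h hmem
  rw [real_smul, im_exp_neg_mul_I_mul_add, im_exp_neg_mul_I_mul_exp_mul_I,
    show η - χ' = -(χ' - η) by ring, Real.sin_neg] at him
  linarith

lemma ball_exp_mul_I_subset_sector (hχ : 0 ≤ χ) (hχη : χ ≤ η) (hηχ' : η ≤ χ')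
    (hχ' : χ' ≤ π / 2) :
    ball (exp (η * I)) (Real.sin (min (η - χ) (χ' - η))) ⊆ sector χ χ' := by
  intro z hz
  rw [mem_ball] at hz
  have hmin₀ : -(π / 2) ≤ min (η - χ) (χ' - η) := le_min (by linarith) (by linarith)
  have hleft : Real.sin (min (η - χ) (χ' - η)) ≤ Real.sin (η - χ) :=
    Real.sin_le_sin_of_le_of_le_pi_div_two hmin₀ (by linarith) (min_le_left _ _)
  have hright : Real.sin (min (η - χ) (χ' - η)) ≤ Real.sin (χ' - η) :=
    Real.sin_le_sin_of_le_of_le_pi_div_two hmin₀ (by linarith) (min_le_right _ _)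
  have hcos : Real.sin (χ' - η) ≤ Real.cos η := by
    rw [← Real.sin_pi_div_two_sub]
    exact Real.sin_le_sin_of_le_of_le_pi_div_two (by linarith) (by linarith) (by linarith)
  have hχz := abs_le.mp (abs_im_exp_neg_mul_I_mul_sub_le χ z (exp (η * I)))
  have hχ'z := abs_le.mp (abs_im_exp_neg_mul_I_mul_sub_le χ' z (exp (η * I)))
  have hre := abs_le.mp ((abs_re_le_norm (z - exp (η * I))).trans_eq (dist_eq z _).symm)
  rw [im_exp_neg_mul_I_mul_exp_mul_I] at hχz hχ'z
  rw [sub_re, exp_ofReal_mul_I_re] at hre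
  rw [show η - χ' = -(χ' - η) by ring, Real.sin_neg] at hχ'z
  exact mem_sector_of_re_pos (by linarith) (by linarith) hχ' (by linarith) (by linarith)
    (by linarith)

end Sector

/-- Second assertion of Lemma 7.2 of the paper: for `0 ≤ χ ≤ η < χ' ≤ π/2`,
the distance from the unit-circle point `c = e^{ηi}` to the exterior of the
semi-open sector `Γ(χ, χ') = {r e^{ψi} : r ≥ 0, χ ≤ ψ < χ'}` equals
`sin(min(η - χ, χ' - η))`. -/
theorem dist_to_sector_exterior (χ η χ' : ℝ)
    (h1 : 0 ≤ χ) (h2 : χ ≤ η) (h3 : η < χ') (h4 : χ' ≤ Real.pi / 2) :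
    Metric.infDist (Complex.exp (η * Complex.I))
      {z : ℂ | ∃ r : ℝ, 0 ≤ r ∧ ∃ ψ : ℝ, χ ≤ ψ ∧ ψ < χ' ∧
        z = r * Complex.exp (ψ * Complex.I)}ᶜ =
      Real.sin (min (η - χ) (χ' - η)) := by
  change infDist _ (sector χ χ')ᶜ = _
  have hwidth : χ' ≤ χ + π := by linarith [Real.pi_pos]
  have hcompl : (sector χ χ')ᶜ.Nonempty := by
    refine ⟨exp ((χ - π / 2 : ℝ) * I), fun hmem => ?_⟩
    have him := im_exp_neg_mul_I_mul_nonneg_of_mem_sector hwidth hmem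
    rw [im_exp_neg_mul_I_mul_exp_mul_I, sub_sub_cancel_left, Real.sin_neg,
      Real.sin_pi_div_two] at him
    linarith
  refine le_antisymm ?_ ((le_infDist hcompl).mpr fun z hz => ?_)
  · rcases min_choice (η - χ) (χ' - η) with hmin | hmin <;> rw [hmin]
    · exact infDist_exp_mul_I_compl_sector_le_sin_sub_left hwidth h2 (by linarith)
    · exact infDist_exp_mul_I_compl_sector_le_sin_sub_right hwidth h3.le (by linarith)
  · by_contra! hlt
    exact hz (ball_exp_mul_I_subset_sector h1 h2 h3.le h4 (mem_ball'.mpr hlt))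
end

section
/- Let k ≥ 12 be an integer, let φ be a real number, and set c = exp((φ + π/k)√−1). Let Γ′ be the semi-open sector Γ′ = { r·exp(ψ√−1) : r ≥ 0, ψ ≡ φ − 2π/k + μ (mod 2π) for some 0 ≤ μ < 6π/k }, i.e., the union of the sector with angular interval [φ, φ + 2π/k) and its two adjacent sectors of angular width 2π/k on both sides. Then every z ∈ ℂ \ Γ′ satisfies |c − z| ≥ sin(3π/k); i.e., the distance from the center c to the exterior of Γ′ is at least sin(3π/k). -/
/-!
Rotating by `e^{-i(φ + π/k)}` moves `c` to `1`. Writing `z = ‖z‖ e^{i(φ - 2π/k + μ)}` with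
`μ ∈ [0, 2π)`, the condition `z ∉ Γ′` means `μ ≥ 6π/k`, so the rotated `z` lies on a ray of
direction `δ = μ - 3π/k ∈ [3π/k, 2π - 3π/k]`, where `cos δ ≤ cos (3π/k)`. The distance from `1`
to any such ray is at least `sin (3π/k)`.
-/

open Complex Real

lemma Complex.exists_eq_norm_mul_exp_add_mul_I (z : ℂ) (α : ℝ) :
    ∃ μ : ℝ, 0 ≤ μ ∧ μ < 2 * π ∧ z = ‖z‖ * exp ((α + μ : ℝ) * I) := by
  obtain ⟨hαt, htα⟩ := toIcoMod_mem_Ico two_pi_pos α (arg z)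
  refine ⟨toIcoMod two_pi_pos α (arg z) - α, by linarith, by linarith, ?_⟩
  have hperiod : ((toIcoMod two_pi_pos α (arg z) : ℝ) : ℂ) * I
      = arg z * I - toIcoDiv two_pi_pos α (arg z) * (2 * π * I) := by
    rw [← self_sub_toIcoDiv_zsmul, zsmul_eq_mul]
    push_cast
    ring
  rw [add_sub_cancel, hperiod, exp_sub, exp_int_mul_two_pi_mul_I, div_one, norm_mul_exp_arg_mul_I]

lemma Complex.norm_exp_mul_I_sub_ofReal_mul_exp_mul_I (θ ψ r : ℝ) :
    ‖exp (θ * I) - r * exp (ψ * I)‖ = ‖1 - r * exp ((ψ - θ : ℝ) * I)‖ := by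
  have h : exp (θ * I) - r * exp (ψ * I) = exp (θ * I) * (1 - r * exp ((ψ - θ : ℝ) * I)) := by
    rw [mul_sub, mul_one, mul_left_comm, ← exp_add]
    push_cast
    ring_nf
  rw [h, norm_mul, norm_exp_ofReal_mul_I, one_mul]

lemma Complex.norm_one_sub_ofReal_mul_exp_mul_I_sq (r δ : ℝ) :
    ‖1 - r * exp (δ * I)‖ ^ 2 = 1 - 2 * r * Real.cos δ + r ^ 2 := by
  rw [Complex.sq_norm, normSq_apply]
  simp only [exp_mul_I, sub_re, one_re, mul_re, ofReal_re, add_re, cos_ofReal_re, sin_ofReal_re,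
    I_re, mul_zero, sin_ofReal_im, I_im, mul_one, sub_self, add_zero, ofReal_im, add_im,
    cos_ofReal_im, mul_im, zero_add, zero_mul, sub_zero, sub_im, one_im, zero_sub, mul_neg, neg_mul,
    neg_neg]
  linear_combination r ^ 2 * Real.sin_sq_add_cos_sq δ

-- `‖1 - r e^{iδ}‖² = (r - cos s)² + sin² s + 2 r (cos s - cos δ)`.
lemma Complex.sin_le_norm_one_sub_ofReal_mul_exp_mul_I {s δ r : ℝ} (hr : 0 ≤ r)
    (hcos : Real.cos δ ≤ Real.cos s) : Real.sin s ≤ ‖1 - r * exp (δ * I)‖ := by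
  have hsq : Real.sin s ^ 2 ≤ ‖1 - r * exp (δ * I)‖ ^ 2 := by
    rw [norm_one_sub_ofReal_mul_exp_mul_I_sq]
    nlinarith [Real.sin_sq_add_cos_sq s, sq_nonneg (r - Real.cos s), mul_nonneg hr (sub_nonneg.2 hcos)]
  exact (abs_le_of_sq_le_sq' hsq (norm_nonneg _)).2

lemma Real.cos_le_cos_of_le_of_le_two_pi_sub {s δ : ℝ} (hs₀ : 0 ≤ s) (hsδ : s ≤ δ)
    (hδ : δ ≤ 2 * π - s) : Real.cos δ ≤ Real.cos s := by
  rcases le_total δ π with hδπ | hπδ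
  · exact cos_le_cos_of_nonneg_of_le_pi hs₀ hδπ hsδ
  · rw [← cos_two_pi_sub δ]
    exact cos_le_cos_of_nonneg_of_le_pi hs₀ (by linarith) (by linarith)

theorem dist_center_to_exterior_of_extended_sector_general (k : ℕ) (φ : ℝ)
    (c : ℂ) (hc : c = Complex.exp ((φ + Real.pi / k) * Complex.I)) :
    ∀ z : ℂ,
      z ∉ {w : ℂ | ∃ r : ℝ, 0 ≤ r ∧ ∃ μ : ℝ, 0 ≤ μ ∧ μ < 6 * Real.pi / k ∧
          w = r * Complex.exp ((φ - 2 * Real.pi / k + μ) * Complex.I)} →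
      Real.sin (3 * Real.pi / k) ≤ ‖c - z‖ := by
  intro z hz
  obtain ⟨μ, hμ₀, hμ₂π, hz_eq⟩ := exists_eq_norm_mul_exp_add_mul_I z (φ - 2 * π / k)
  have hμ : 6 * π / k ≤ μ := not_lt.1 fun hμ ↦
    hz ⟨‖z‖, norm_nonneg z, μ, hμ₀, hμ, hz_eq.trans (by push_cast; rfl)⟩
  have hs₀ : 0 ≤ 3 * π / k := by positivity
  have hcz : ‖c - z‖ = ‖1 - ‖z‖ * exp ((μ - 3 * π / k : ℝ) * I)‖ := by
    have hθ : (φ : ℂ) + π / k = (φ + π / k : ℝ) := by push_cast; rfl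
    nth_rw 1 [hc, hz_eq, hθ, norm_exp_mul_I_sub_ofReal_mul_exp_mul_I]
    congr 5
    push_cast
    ring
  rw [hcz]
  have hδ : 3 * π / k ≤ μ - 3 * π / k := by
    linarith [show 6 * π / k = 2 * (3 * π / k) by ring]
  exact sin_le_norm_one_sub_ofReal_mul_exp_mul_I (norm_nonneg z)
    (cos_le_cos_of_le_of_le_two_pi_sub hs₀ hδ (by linarith))

/-- Part (i) of Theorem 7.3 of the paper: for the uniform `k`-partition of the
unit circle (`k ≥ 12`), the midpoint `c = e^{(φ + π/k)i}` of an arc has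
distance at least `sin(3π/k)` from the exterior of the union `Γ'` of its own
sector `[φ, φ + 2π/k)` and the two adjacent sectors of angular width `2π/k`. -/
theorem dist_center_to_exterior_of_extended_sector (k : ℕ) (hk : 12 ≤ k) (φ : ℝ)
    (c : ℂ) (hc : c = Complex.exp ((φ + Real.pi / k) * Complex.I)) :
    ∀ z : ℂ,
      z ∉ {w : ℂ | ∃ r : ℝ, 0 ≤ r ∧ ∃ μ : ℝ, 0 ≤ μ ∧ μ < 6 * Real.pi / k ∧
          w = r * Complex.exp ((φ - 2 * Real.pi / k + μ) * Complex.I)} →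
      Real.sin (3 * Real.pi / k) ≤ ‖c - z‖ :=
  dist_center_to_exterior_of_extended_sector_general k φ c hc
end

section
/- Let k ≥ 12 be an integer, let φ be a real number, set c = exp((φ + π/k)√−1), let A = { exp(ψ√−1) : ψ ≡ φ + μ (mod 2π), 0 ≤ μ < 2π/k } be the semi-open arc of the unit circle of length 2π/k starting at angle φ, and let Γ′ = { r·exp(ψ√−1) : r ≥ 0, ψ ≡ φ − 2π/k + μ (mod 2π), 0 ≤ μ < 6π/k }. Set θ = 2·sin(π/(2k))/sin(3π/k). Then 0 < θ < 1, and for every t ∈ A and every s ∈ ℂ \ Γ′ one has |t − c| ≤ θ·|s − c|; i.e., the arc A and the exterior of Γ′ are (θ, c)-separated. -/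
/-!
Seen from the midpoint `c = e^{i(φ + π/k)}`, a point `t` of the arc lies at angular distance at
most `π/k`, so the chord `|t - c|` is at most `2 sin(π/(2k))`. A point `s = r e^{iψ}` outside `Γ'`
has `ψ` at angular distance at least `3π/k` from `φ + π/k`, and
`|s - c|² = r² - 2r cos(ψ - φ - π/k) + 1 ≥ r² - 2r cos(3π/k) + 1 ≥ sin²(3π/k)`.
Hence `θ = 2 sin(π/(2k)) / sin(3π/k)` works, and `θ < 1` follows from `sin x < x` together with
Jordan's inequality `sin y ≥ 2y/π`.
-/

open Real

namespace Real

lemma cos_le_cos_of_le_of_le_two_pi_sub_s13 {p x : ℝ} (hp : 0 ≤ p) (hpx : p ≤ x)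
    (hx : x ≤ 2 * π - p) : cos x ≤ cos p := by
  rcases le_total x π with hxπ | hπx
  · exact cos_le_cos_of_nonneg_of_le_pi hp hxπ hpx
  · rw [← cos_two_pi_sub x]
    exact cos_le_cos_of_nonneg_of_le_pi hp (by linarith) (by linarith)

lemma two_mul_sin_lt_sin_six_mul {x : ℝ} (hx₀ : 0 < x) (hx : x ≤ π / 12) :
    2 * sin x < sin (6 * x) := by
  have hjordan := mul_le_sin (by linarith : 0 ≤ 6 * x) (by linarith)
  have hgap : 0 < 2 / π * (6 * x) - 2 * x := by
    rw [show 2 / π * (6 * x) - 2 * x = 2 * x * (6 - π) / π by field_simp]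
    exact div_pos (mul_pos (by positivity) (by linarith [pi_lt_d2])) pi_pos
  linarith [sin_lt hx₀]

end Real

namespace Complex

lemma exists_eq_ofReal_mul_exp_of_mem_Ico (s : ℂ) (a : ℝ) :
    ∃ r : ℝ, 0 ≤ r ∧ ∃ ψ ∈ Set.Ico a (a + 2 * π), s = r * exp (ψ * I) := by
  refine ⟨‖s‖, norm_nonneg s, toIcoMod two_pi_pos a s.arg, toIcoMod_mem_Ico _ _ _, ?_⟩
  rw [toIcoMod]
  push_cast
  rw [exp_mul_I_periodic.sub_zsmul_eq, norm_mul_exp_arg_mul_I]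

lemma norm_ofReal_mul_exp_sub_exp_sq (r a b : ℝ) :
    ‖(r : ℂ) * exp (a * I) - exp (b * I)‖ ^ 2 = r ^ 2 - 2 * r * Real.cos (a - b) + 1 := by
  rw [Complex.sq_norm, normSq_apply]
  simp only [sub_re, mul_re, ofReal_re, exp_ofReal_mul_I_re, ofReal_im, exp_ofReal_mul_I_im,
    zero_mul, sub_zero, sub_im, mul_im, add_zero, Real.cos_sub]
  linear_combination r ^ 2 * Real.sin_sq_add_cos_sq a + Real.sin_sq_add_cos_sq b

lemma norm_exp_sub_exp_le_two_mul_sin_half {a b y : ℝ} (hab : |a - b| ≤ y) (hy : y ≤ π) :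
    ‖exp (a * I) - exp (b * I)‖ ≤ 2 * Real.sin (y / 2) := by
  have hy₀ : 0 ≤ Real.sin (y / 2) :=
    Real.sin_nonneg_of_nonneg_of_le_pi (by linarith [abs_nonneg (a - b)])
      (by linarith [abs_nonneg (a - b)])
  have hcos : Real.cos y ≤ Real.cos (a - b) := by
    rw [← Real.cos_abs (a - b)]
    exact Real.cos_le_cos_of_nonneg_of_le_pi (abs_nonneg _) hy hab
  have hcos_half : Real.cos y = 1 - 2 * Real.sin (y / 2) ^ 2 := by
    rw [← Real.cos_two_mul_eq_one_sub]; ring_nf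
  have hsq := norm_ofReal_mul_exp_sub_exp_sq 1 a b
  push_cast at hsq
  rw [one_mul] at hsq
  rw [← sq_le_sq₀ (norm_nonneg _) (by positivity)]
  nlinarith

/-- Completing the square: `r² - 2r cos p + 1 = (r - cos p)² + sin² p`. -/
lemma sin_le_norm_ofReal_mul_exp_sub_exp {r a b p : ℝ} (hr : 0 ≤ r)
    (hcos : Real.cos (a - b) ≤ Real.cos p) :
    Real.sin p ≤ ‖(r : ℂ) * exp (a * I) - exp (b * I)‖ := by
  have hsq : Real.sin p ^ 2 ≤ ‖(r : ℂ) * exp (a * I) - exp (b * I)‖ ^ 2 := by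
    rw [norm_ofReal_mul_exp_sub_exp_sq]
    nlinarith [sq_nonneg (r - Real.cos p), Real.sin_sq_add_cos_sq p,
      mul_nonneg hr (sub_nonneg.2 hcos)]
  exact (le_abs_self _).trans ((sq_le_sq.1 hsq).trans (abs_norm _).le)

lemma sin_le_norm_sub_exp_of_forall_ne {s : ℂ} {b p : ℝ} (hp : 0 ≤ p)
    (hs : ∀ r : ℝ, 0 ≤ r → ∀ ν : ℝ, 0 ≤ ν → ν < 2 * p → s ≠ r * exp ((b - p + ν) * I)) :
    Real.sin p ≤ ‖s - exp (b * I)‖ := by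
  obtain ⟨r, hr, ψ, ⟨hψ₀, hψ⟩, rfl⟩ := exists_eq_ofReal_mul_exp_of_mem_Ico s (b - p)
  have hψp : b - p + 2 * p ≤ ψ := by
    by_contra! h
    refine hs r hr (ψ - (b - p)) (by linarith) (by linarith) ?_
    push_cast; ring_nf
  exact sin_le_norm_ofReal_mul_exp_sub_exp hr
    (Real.cos_le_cos_of_le_of_le_two_pi_sub_s13 hp (by linarith) (by linarith))

end Complex

/-- Part (ii) of Theorem 7.3 of the paper: in the uniform `k`-partition of the
unit circle (`k ≥ 12`), the arc `A = {e^{(φ+μ)i} : 0 ≤ μ < 2π/k}` and the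
exterior of the union `Γ'` of its sector with the two adjacent sectors are
`(θ, c)`-separated about the arc's midpoint `c = e^{(φ + π/k)i}`, with
`θ = 2 sin(π/(2k))/sin(3π/k)`, and `0 < θ < 1`. -/
theorem arc_and_sector_exterior_separated (k : ℕ) (hk : 12 ≤ k) (φ : ℝ)
    (c : ℂ) (hc : c = Complex.exp ((φ + Real.pi / k) * Complex.I))
    (θ : ℝ) (hθ : θ = 2 * Real.sin (Real.pi / (2 * k)) / Real.sin (3 * Real.pi / k)) :
    0 < θ ∧ θ < 1 ∧
      ∀ t ∈ {w : ℂ | ∃ μ : ℝ, 0 ≤ μ ∧ μ < 2 * Real.pi / k ∧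
          w = Complex.exp ((φ + μ) * Complex.I)},
      ∀ s ∉ {w : ℂ | ∃ r : ℝ, 0 ≤ r ∧ ∃ μ : ℝ, 0 ≤ μ ∧ μ < 6 * Real.pi / k ∧
          w = r * Complex.exp ((φ - 2 * Real.pi / k + μ) * Complex.I)},
        ‖t - c‖ ≤ θ * ‖s - c‖ := by
  have hk' : (12 : ℝ) ≤ k := by exact_mod_cast hk
  have hx₀ : 0 < π / k := by positivity
  have hx : π / k ≤ π / 12 := div_le_div_of_nonneg_left pi_pos.le (by norm_num) hk'
  rw [show π / (2 * k) = π / k / 2 by ring, show 3 * π / k = 3 * (π / k) by ring] at hθ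
  have hsin_half : 0 < sin (π / k / 2) := sin_pos_of_pos_of_lt_pi (by positivity) (by linarith)
  have hsin_three : 0 < sin (3 * (π / k)) := sin_pos_of_pos_of_lt_pi (by positivity) (by linarith)
  have hlt : 2 * sin (π / k / 2) < sin (3 * (π / k)) := by
    have := two_mul_sin_lt_sin_six_mul (by positivity : 0 < π / k / 2) (by linarith)
    rwa [show 6 * (π / k / 2) = 3 * (π / k) by ring] at this
  have hθ₀ : 0 < θ := hθ ▸ by positivity
  refine ⟨hθ₀, hθ ▸ (div_lt_one hsin_three).2 hlt, ?_⟩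
  rintro t ⟨μ, hμ₀, hμ, ht_eq⟩ s hs
  rw [mul_div_assoc] at hμ
  have ht : ‖t - c‖ ≤ 2 * sin (π / k / 2) := by
    have := Complex.norm_exp_sub_exp_le_two_mul_sin_half (a := φ + μ) (b := φ + π / k)
      (y := π / k) (by rw [abs_le]; constructor <;> linarith) (by linarith)
    push_cast at this
    rwa [ht_eq, hc]
  have hs' : sin (3 * (π / k)) ≤ ‖s - c‖ := by
    have := Complex.sin_le_norm_sub_exp_of_forall_ne (s := s) (b := φ + π / k)
      (p := 3 * (π / k)) (by positivity) fun r hr ν hν₀ hν h ↦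
        hs ⟨r, hr, ν, hν₀, by rw [mul_div_assoc]; linarith, by rw [h]; push_cast; ring_nf⟩
    push_cast at this
    rwa [hc]
  calc ‖t - c‖ ≤ 2 * sin (π / k / 2) := ht
    _ = θ * sin (3 * (π / k)) := by rw [hθ, div_mul_cancel₀ _ hsin_three.ne']
    _ ≤ θ * ‖s - c‖ := by gcongr
end

section
/- Let θ be a real number with 0 < θ < 1, let φ and φ′ be real numbers with 0 ≤ φ < φ′ ≤ 2π, set c = exp(((φ + φ′)/2)√−1) (the midpoint of the arc A(φ, φ′)) and r = (2/θ)·sin((φ′ − φ)/4). Then for every point t = exp(ψ√−1) with φ ≤ ψ < φ′ and every s ∈ ℂ with |s − c| > r, one has |t − c| ≤ θ·|s − c|; i.e., the semi-open arc A(φ, φ′) and the exterior of the disc D(c, r) = { z : |z − c| ≤ r } are (θ, c)-separated. -/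
/-! The chord from `exp (ψ i)` to the midpoint `exp (μ i)` has length `2 |sin ((ψ - μ) / 2)|`.
On the arc `|ψ - μ| / 2 ≤ (φ' - φ) / 4 ≤ π / 2`, where `sin` is increasing, so every point of the
arc is within `2 sin ((φ' - φ) / 4) = θ r` of `c`, while `s` is farther than `r` from `c`. -/

open Complex

theorem norm_exp_mul_I_sub_exp_mul_I (a b : ℝ) :
    ‖exp (a * I) - exp (b * I)‖ = 2 * |Real.sin ((a - b) / 2)| := by
  have factor : exp (a * I) - exp (b * I) = exp (b * I) * (exp (I * ↑(a - b)) - 1) := by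
    rw [mul_sub, ← exp_add, mul_one]
    push_cast
    ring_nf
  rw [factor, norm_mul, norm_exp_ofReal_mul_I, one_mul, norm_exp_I_mul_ofReal_sub_one,
    Real.norm_eq_abs, abs_mul, abs_two]

theorem Real.abs_sin_le_sin_of_abs_le {x δ : ℝ} (hx : |x| ≤ δ) (hδ : δ ≤ Real.pi / 2) :
    |sin x| ≤ sin δ := by
  rw [abs_sin_eq_sin_abs_of_abs_le_pi (by linarith [pi_pos])]
  exact sin_le_sin_of_le_of_le_pi_div_two (by linarith [pi_pos, abs_nonneg x]) hδ hx

theorem norm_exp_mul_I_sub_exp_midpoint_le {φ φ' ψ : ℝ} (hφψ : φ ≤ ψ) (hψφ' : ψ ≤ φ')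
    (hlen : φ' - φ ≤ 2 * Real.pi) :
    ‖exp (ψ * I) - exp ((φ + φ') / 2 * I)‖ ≤ 2 * Real.sin ((φ' - φ) / 4) := by
  have midpoint_cast : ((φ + φ') / 2 : ℂ) = ((φ + φ') / 2 : ℝ) := by push_cast; ring
  rw [midpoint_cast, norm_exp_mul_I_sub_exp_mul_I]
  have half_offset : |(ψ - (φ + φ') / 2) / 2| ≤ (φ' - φ) / 4 := by
    rw [abs_le]; constructor <;> linarith
  gcongr
  exact Real.abs_sin_le_sin_of_abs_le half_offset (by linarith [Real.pi_pos])

theorem arc_and_disc_exterior_separated_general (θ : ℝ) (hθ0 : 0 < θ)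
    (φ φ' : ℝ) (h1 : 0 ≤ φ) (h3 : φ' ≤ 2 * Real.pi)
    (c : ℂ) (hc : c = Complex.exp (((φ + φ') / 2) * Complex.I))
    (r : ℝ) (hr : r = (2 / θ) * Real.sin ((φ' - φ) / 4)) :
    ∀ ψ : ℝ, φ ≤ ψ → ψ < φ' → ∀ s : ℂ, r < ‖s - c‖ →
      ‖Complex.exp (ψ * Complex.I) - c‖ ≤ θ * ‖s - c‖ := by
  intro ψ hφψ hψφ' s hs
  calc ‖exp (ψ * I) - c‖ ≤ 2 * Real.sin ((φ' - φ) / 4) := by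
        rw [hc]; exact norm_exp_mul_I_sub_exp_midpoint_le hφψ hψφ'.le (by linarith)
    _ = θ * r := by rw [hr]; field_simp
    _ ≤ θ * ‖s - c‖ := by gcongr

/-- Lemma 7.3 of the paper: the semi-open arc `A(φ, φ')` of the unit circle and
the exterior of the disc `D(c, r)` centered at the arc's midpoint
`c = e^{((φ+φ')/2)i}` with radius `r = (2/θ) sin((φ' - φ)/4)` are
`(θ, c)`-separated. -/
theorem arc_and_disc_exterior_separated (θ : ℝ) (hθ0 : 0 < θ) (hθ1 : θ < 1)
    (φ φ' : ℝ) (h1 : 0 ≤ φ) (h2 : φ < φ') (h3 : φ' ≤ 2 * Real.pi)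
    (c : ℂ) (hc : c = Complex.exp (((φ + φ') / 2) * Complex.I))
    (r : ℝ) (hr : r = (2 / θ) * Real.sin ((φ' - φ) / 4)) :
    ∀ ψ : ℝ, φ ≤ ψ → ψ < φ' → ∀ s : ℂ, r < ‖s - c‖ →
      ‖Complex.exp (ψ * Complex.I) - c‖ ≤ θ * ‖s - c‖ :=
  arc_and_disc_exterior_separated_general θ hθ0 φ φ' h1 h3 c hc r hr
end

section
/- Let n ≥ 1 and k ≥ 12 be integers, ω = exp(2π√−1/n), let f ∈ ℂ with |f| = 1, set t_j = f·ω^j for 0 ≤ j < n, and let s_0, …, s_{m−1} ∈ ℂ. Fix q ∈ {0, …, k−1}, set φ_q = 2πq/k and c_q = exp((φ_q + π/k)√−1), let J = { j : t_j = exp(ψ√−1) with ψ ≡ φ_q + μ (mod 2π) for some 0 ≤ μ < 2π/k } and I = { i : s_i ∉ Γ′_q }, where Γ′_q = { r·exp(ψ√−1) : r ≥ 0, ψ ≡ φ_q − 2π/k + μ (mod 2π), 0 ≤ μ < 6π/k }. Set θ = 2·sin(π/(2k))/sin(3π/k). Then s_i ≠ t_j for all i ∈ I, j ∈ J, and for every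 positive integer ρ there exist matrices F ∈ ℂ^{I×ρ} and G ∈ ℂ^{J×ρ} such that |1/(s_i − t_j) − (F·G^T)_{ij}| ≤ θ^ρ/((1 − θ)·sin(3π/k)) for all i ∈ I and j ∈ J; i.e., the admissible block (1/(s_i − t_j))_{i∈I, j∈J} of the CV matrix C_{s,f} admits a rank-≤ρ approximation with this entrywise error bound. -/
/-!
Let `c = exp((φ_q + π/k) i)` be the midpoint of the `q`-th arc. Every column knot lies on that
arc, hence within the chord length `2 sin(π/(2k))` of `c`, while every row knot lies outside the
cone `Γ'_q` of half-angle `3π/k` around the ray through `c`, hence at distance at least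
`sin(3π/k)` from `c`. So `|t_j - c| ≤ θ |s_i - c|` with `θ < 1`, and truncating the expansion
`1/(s - t) = ∑_ν (t - c)^ν / (s - c)^(ν+1)` after `ρ` terms gives a rank-`ρ` approximation whose
error is the geometric tail `θ^ρ / ((1 - θ) |s - c|)`.
-/

open Finset
open scoped Real

theorem inv_sub_sub_geom_sum {K : Type*} [Field K] {a b : K} (ha : a ≠ 0) (hab : a ≠ b)
    (ρ : ℕ) :
    (a - b)⁻¹ - ∑ ν ∈ range ρ, a⁻¹ ^ (ν + 1) * b ^ ν = (b / a) ^ ρ * (a - b)⁻¹ := by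
  obtain ⟨x, rfl⟩ : ∃ x, b = x * a := ⟨b / a, (div_mul_cancel₀ b ha).symm⟩
  have hx : 1 - x ≠ 0 := fun h => hab (by linear_combination a * h)
  have hsum : ∑ ν ∈ range ρ, a⁻¹ ^ (ν + 1) * (x * a) ^ ν = a⁻¹ * ∑ ν ∈ range ρ, x ^ ν := by
    rw [mul_sum]
    refine sum_congr rfl fun ν _ => ?_
    rw [mul_pow, pow_succ', inv_pow]
    field_simp
  have hgeom := geom_sum_mul_neg x ρ
  rw [hsum, mul_div_cancel_right₀ x ha, ← one_sub_mul, mul_inv, mul_comm a⁻¹]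
  field_simp
  linear_combination -hgeom

theorem ne_of_norm_le_mul_norm {E : Type*} [SeminormedAddGroup E] {a b : E} {θ : ℝ}
    (hθ : θ < 1) (ha : 0 < ‖a‖) (hb : ‖b‖ ≤ θ * ‖a‖) : a ≠ b := by
  rintro rfl
  nlinarith

theorem norm_inv_sub_sub_geom_sum_le {K : Type*} [NormedField K] {a b : K} {θ : ℝ}
    (hθ : θ < 1) (ha : a ≠ 0) (hb : ‖b‖ ≤ θ * ‖a‖) (ρ : ℕ) :
    ‖(a - b)⁻¹ - ∑ ν ∈ range ρ, a⁻¹ ^ (ν + 1) * b ^ ν‖ ≤ θ ^ ρ / ((1 - θ) * ‖a‖) := by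
  have ha' : 0 < ‖a‖ := norm_pos_iff.mpr ha
  have hθ0 : 0 ≤ θ := nonneg_of_mul_nonneg_left ((norm_nonneg b).trans hb) ha'
  have hsep : (1 - θ) * ‖a‖ ≤ ‖a - b‖ := by linarith [norm_sub_norm_le a b]
  have hratio : ‖b / a‖ ≤ θ := by rwa [norm_div, div_le_iff₀ ha']
  rw [inv_sub_sub_geom_sum ha (ne_of_norm_le_mul_norm hθ ha' hb), norm_mul, norm_pow, norm_inv,
    div_eq_mul_inv (θ ^ ρ)]
  exact mul_le_mul (pow_le_pow_left₀ (norm_nonneg _) hratio ρ)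
    (inv_anti₀ (mul_pos (by linarith) ha') hsep) (by positivity) (pow_nonneg hθ0 ρ)

theorem exists_low_rank_approx_inv_sub {K ι κ : Type*} [NormedField K] {s : ι → K}
    {t : κ → K} {c : K} {R θ : ℝ} (hR : 0 < R) (hθ : θ < 1) (hs : ∀ i, R ≤ ‖s i - c‖)
    (ht : ∀ j, ‖t j - c‖ ≤ θ * R) :
    (∀ i j, s i ≠ t j) ∧ ∀ ρ : ℕ, ∃ (F : ι → Fin ρ → K) (G : κ → Fin ρ → K), ∀ i j,
      ‖(s i - t j)⁻¹ - ∑ ν : Fin ρ, F i ν * G j ν‖ ≤ θ ^ ρ / ((1 - θ) * R) := by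
  have hs_pos (i : ι) : 0 < ‖s i - c‖ := hR.trans_le (hs i)
  have hθ0 (j : κ) : 0 ≤ θ := nonneg_of_mul_nonneg_left ((norm_nonneg _).trans (ht j)) hR
  have hsep (i : ι) (j : κ) : ‖t j - c‖ ≤ θ * ‖s i - c‖ :=
    (ht j).trans (mul_le_mul_of_nonneg_left (hs i) (hθ0 j))
  refine ⟨fun i j hij => ne_of_norm_le_mul_norm hθ (hs_pos i) (hsep i j) (by rw [hij]),
    fun ρ => ⟨fun i ν => (s i - c)⁻¹ ^ ((ν : ℕ) + 1), fun j ν => (t j - c) ^ (ν : ℕ),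
      fun i j => ?_⟩⟩
  rw [Fin.sum_univ_eq_sum_range (fun ν => (s i - c)⁻¹ ^ (ν + 1) * (t j - c) ^ ν),
    show s i - t j = (s i - c) - (t j - c) by ring]
  calc _ ≤ θ ^ ρ / ((1 - θ) * ‖s i - c‖) :=
        norm_inv_sub_sub_geom_sum_le hθ (norm_pos_iff.mp (hs_pos i)) (hsep i j) ρ
    _ ≤ θ ^ ρ / ((1 - θ) * R) := by
        have := hθ0 j
        gcongr
        exact hs i

namespace Complex

theorem norm_exp_mul_I_sub_exp_mul_I (a b : ℝ) :
    ‖exp (a * I) - exp (b * I)‖ = 2 * |Real.sin ((a - b) / 2)| := by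
  have h : exp (a * I) - exp (b * I) = exp (b * I) * (exp (I * ↑(a - b)) - 1) := by
    rw [mul_sub, ← exp_add, mul_one]
    push_cast
    ring_nf
  rw [h, norm_mul, norm_exp_ofReal_mul_I, one_mul, norm_exp_I_mul_ofReal_sub_one, norm_mul,
    Real.norm_eq_abs, Real.norm_eq_abs, abs_two]

theorem norm_exp_mul_I_sub_exp_mul_I_le {a b η : ℝ} (hη : η ≤ π / 2) (hab : |a - b| ≤ 2 * η) :
    ‖exp (a * I) - exp (b * I)‖ ≤ 2 * Real.sin η := by
  have hhalf : |(a - b) / 2| ≤ η := by rw [abs_div, abs_two]; linarith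
  rw [norm_exp_mul_I_sub_exp_mul_I,
    Real.abs_sin_eq_sin_abs_of_abs_le_pi (by linarith [Real.pi_pos])]
  gcongr
  exact Real.sin_le_sin_of_le_of_le_pi_div_two (by linarith [abs_nonneg ((a - b) / 2)]) hη hhalf

theorem norm_exp_sub_exp_midpoint_le {φ x μ : ℝ} (hx : x ≤ π) (hμ0 : 0 ≤ μ) (hμ : μ ≤ 2 * x) :
    ‖exp (↑(φ + μ) * I) - exp (↑(φ + x) * I)‖ ≤ 2 * Real.sin (x / 2) :=
  norm_exp_mul_I_sub_exp_mul_I_le (by linarith) (by rw [abs_le]; constructor <;> linarith)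

/-- `|sin (arg z)|` is the distance from `1` to the line through `0` and `z`: rotating by
`-arg z` makes that line the real axis. -/
theorem abs_sin_arg_le_norm_sub_one (z : ℂ) : |Real.sin (arg z)| ≤ ‖z - 1‖ := by
  set e := exp (↑(-arg z) * I)
  have hrot : (z - 1) * e = ‖z‖ - e :=
    calc (z - 1) * e = ‖z‖ * exp (arg z * I) * e - e := by rw [norm_mul_exp_arg_mul_I]; ring
      _ = ‖z‖ - e := by
        rw [mul_assoc, ← exp_add, ← add_mul, ← ofReal_add, add_neg_cancel, ofReal_zero,
          zero_mul, exp_zero, mul_one]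
  calc |Real.sin (arg z)| = |((z - 1) * e).im| := by
        rw [hrot, sub_im, ofReal_im, exp_ofReal_mul_I_im, Real.sin_neg, zero_sub, neg_neg]
    _ ≤ ‖(z - 1) * e‖ := abs_im_le_norm _
    _ = ‖z - 1‖ := by rw [norm_mul, norm_exp_ofReal_mul_I, mul_one]

theorem sin_le_norm_sub_one_of_le_abs_arg {z : ℂ} {δ : ℝ} (hδ0 : 0 ≤ δ) (hδ : δ ≤ π / 2)
    (harg : δ ≤ |arg z|) : Real.sin δ ≤ ‖z - 1‖ := by
  rcases le_or_gt |arg z| (π / 2) with hright | hleft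
  · calc Real.sin δ ≤ Real.sin |arg z| :=
          Real.sin_le_sin_of_le_of_le_pi_div_two (by linarith [Real.pi_pos]) hright harg
      _ = |Real.sin (arg z)| := (Real.abs_sin_eq_sin_abs_of_abs_le_pi (abs_arg_le_pi z)).symm
      _ ≤ ‖z - 1‖ := abs_sin_arg_le_norm_sub_one z
  · have hre : z.re < 0 := by
      by_contra! h
      exact hleft.not_ge (abs_arg_le_pi_div_two_iff.mpr h)
    calc Real.sin δ ≤ 1 := Real.sin_le_one δ
      _ ≤ |(z - 1).re| := by rw [sub_re, one_re, abs_of_neg (by linarith)]; linarith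
      _ ≤ ‖z - 1‖ := abs_re_le_norm _

theorem exists_eq_norm_mul_exp_of_norm_sub_exp_lt_sin {w : ℂ} {c δ : ℝ} (hδ0 : 0 ≤ δ)
    (hδ : δ ≤ π / 2) (hw : ‖w - exp (c * I)‖ < Real.sin δ) :
    ∃ ψ : ℝ, |ψ| < δ ∧ w = ‖w‖ * exp ((c + ψ) * I) := by
  set z := w / exp (c * I)
  have hwz : w = z * exp (c * I) := (div_mul_cancel₀ w (exp_ne_zero _)).symm
  have hnorm : ‖z‖ = ‖w‖ := by rw [norm_div, norm_exp_ofReal_mul_I, div_one]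
  refine ⟨arg z, ?_, ?_⟩
  · by_contra! harg
    have h := sin_le_norm_sub_one_of_le_abs_arg hδ0 hδ harg
    rw [hwz, ← sub_one_mul, norm_mul, norm_exp_ofReal_mul_I, mul_one] at hw
    linarith
  · rw [← hnorm, add_mul, exp_add, mul_comm (exp _), ← mul_assoc, norm_mul_exp_arg_mul_I, hwz]

end Complex

theorem Real.two_mul_sin_half_lt_sin_three_mul {x : ℝ} (hx0 : 0 < x) (hx : x ≤ π / 6) :
    2 * Real.sin (x / 2) < Real.sin (3 * x) := by
  have hπ := Real.pi_pos
  have hsin : 2 * Real.sin (x / 2) ≤ x := by linarith [Real.sin_le (x := x / 2) (by linarith)]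
  have hjordan := Real.mul_le_sin (x := 3 * x) (by linarith) (by linarith)
  have h6 : x < 2 / π * (3 * x) := by
    rw [← mul_assoc, lt_mul_iff_one_lt_left hx0, div_mul_eq_mul_div, one_lt_div hπ]
    linarith [Real.pi_lt_d2]
  linarith

theorem cv_admissible_block_low_rank_general (m n k : ℕ) (hk : 12 ≤ k)
    (t : Fin n → ℂ)
    (s : Fin m → ℂ)
    (φq : ℝ)
    (cq : ℂ) (hcq : cq = Complex.exp ((φq + Real.pi / k) * Complex.I))
    (J : Set (Fin n))
    (hJ : J = {j | ∃ μ : ℝ, 0 ≤ μ ∧ μ < 2 * Real.pi / k ∧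
      t j = Complex.exp ((φq + μ) * Complex.I)})
    (I : Set (Fin m))
    (hI : I = {i | s i ∉ {w : ℂ | ∃ r : ℝ, 0 ≤ r ∧ ∃ μ : ℝ, 0 ≤ μ ∧ μ < 6 * Real.pi / k ∧
        w = r * Complex.exp ((φq - 2 * Real.pi / k + μ) * Complex.I)}})
    (θ : ℝ) (hθ : θ = 2 * Real.sin (Real.pi / (2 * k)) / Real.sin (3 * Real.pi / k)) :
    (∀ i ∈ I, ∀ j ∈ J, s i ≠ t j) ∧
      ∀ ρ : ℕ, 1 ≤ ρ →
        ∃ (F : I → Fin ρ → ℂ) (G : J → Fin ρ → ℂ),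
          ∀ (i : I) (j : J),
            ‖(s i.1 - t j.1)⁻¹ - ∑ ν : Fin ρ, F i ν * G j ν‖ ≤
              θ ^ ρ / ((1 - θ) * Real.sin (3 * Real.pi / k)) := by
  set x := π / k with hx
  have hx0 : 0 < x := by positivity
  have hx6 : x ≤ π / 6 :=
    div_le_div_of_nonneg_left Real.pi_pos.le (by norm_num) (by exact_mod_cast (by omega : 6 ≤ k))
  have hmul (c : ℝ) : c * π / k = c * x := by rw [hx]; ring
  have hcq' : cq = Complex.exp (↑(φq + x) * Complex.I) := by rw [hcq, hx]; push_cast; rfl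
  rw [hmul, show π / (2 * k) = x / 2 by rw [hx]; field_simp] at hθ
  rw [hmul]
  have hsin : 0 < Real.sin (3 * x) := Real.sin_pos_of_pos_of_lt_pi (by positivity) (by linarith)
  have hθ1 : θ < 1 := by
    rw [hθ, div_lt_one hsin]
    exact Real.two_mul_sin_half_lt_sin_three_mul hx0 hx6
  have hcol : ∀ j : J, ‖t j - cq‖ ≤ θ * Real.sin (3 * x) := by
    rintro ⟨j, hj⟩
    rw [hJ] at hj
    obtain ⟨μ, hμ0, hμ, htj⟩ := hj
    rw [hθ, div_mul_cancel₀ _ hsin.ne', htj, hcq', ← Complex.ofReal_add]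
    exact Complex.norm_exp_sub_exp_midpoint_le (by linarith) hμ0 (hmul 2 ▸ hμ).le
  have hrow : ∀ i : I, Real.sin (3 * x) ≤ ‖s i - cq‖ := by
    rintro ⟨i, hi⟩
    rw [hI] at hi
    by_contra! hlt
    obtain ⟨ψ, hψ, hsi⟩ := Complex.exists_eq_norm_mul_exp_of_norm_sub_exp_lt_sin (by positivity)
      (by linarith) (hcq' ▸ hlt)
    obtain ⟨hψl, hψr⟩ := abs_lt.mp hψ
    refine hi ⟨‖s i‖, norm_nonneg _, ψ + 3 * x, by linarith, by rw [hmul]; linarith, ?_⟩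
    convert hsi using 3
    rw [hx]
    push_cast
    ring
  obtain ⟨hne, happrox⟩ := exists_low_rank_approx_inv_sub hsin hθ1 hrow hcol
  exact ⟨fun i hi j hj => hne ⟨i, hi⟩ ⟨j, hj⟩, fun ρ _ => happrox ρ⟩

/-- Corollary 7.2 of the paper: every admissible block of a CV matrix
`C_{s,f} = (1/(s_i - f ω^j))`, `|f| = 1`, given by the uniform `k`-partition of
the complex plane (`k ≥ 12`), admits a rank-`≤ ρ` approximation `F·Gᵀ` with
entrywise error at most `θ^ρ/((1 - θ) sin(3π/k))`, where
`θ = 2 sin(π/(2k))/sin(3π/k)`. The block has columns indexed by the knots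
`t_j = f ω^j` on the `q`-th arc and rows indexed by the knots `s_i` outside the
union `Γ'_q` of the `q`-th sector and its two adjacent sectors. -/
theorem cv_admissible_block_low_rank (m n k : ℕ) (hn : 1 ≤ n) (hk : 12 ≤ k)
    (ω : ℂ) (hω : ω = Complex.exp (2 * Real.pi * Complex.I / n))
    (f : ℂ) (hf : ‖f‖ = 1)
    (t : Fin n → ℂ) (ht : ∀ j, t j = f * ω ^ (j : ℕ))
    (s : Fin m → ℂ)
    (q : ℕ) (hq : q < k)
    (φq : ℝ) (hφq : φq = 2 * Real.pi * q / k)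
    (cq : ℂ) (hcq : cq = Complex.exp ((φq + Real.pi / k) * Complex.I))
    (J : Set (Fin n))
    (hJ : J = {j | ∃ μ : ℝ, 0 ≤ μ ∧ μ < 2 * Real.pi / k ∧
      t j = Complex.exp ((φq + μ) * Complex.I)})
    (I : Set (Fin m))
    (hI : I = {i | s i ∉ {w : ℂ | ∃ r : ℝ, 0 ≤ r ∧ ∃ μ : ℝ, 0 ≤ μ ∧ μ < 6 * Real.pi / k ∧
        w = r * Complex.exp ((φq - 2 * Real.pi / k + μ) * Complex.I)}})
    (θ : ℝ) (hθ : θ = 2 * Real.sin (Real.pi / (2 * k)) / Real.sin (3 * Real.pi / k)) :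
    (∀ i ∈ I, ∀ j ∈ J, s i ≠ t j) ∧
      ∀ ρ : ℕ, 1 ≤ ρ →
        ∃ (F : I → Fin ρ → ℂ) (G : J → Fin ρ → ℂ),
          ∀ (i : I) (j : J),
            ‖(s i.1 - t j.1)⁻¹ - ∑ ν : Fin ρ, F i ν * G j ν‖ ≤
              θ ^ ρ / ((1 - θ) * Real.sin (3 * Real.pi / k)) :=
  cv_admissible_block_low_rank_general m n k hk t s φq cq hcq J hJ I hI θ hθ
end

section
/- Let M be an m×n complex matrix, let the row index set {0, …, m−1} be partitioned into consecutive nonempty blocks I_0 < I_1 < … < I_{k−1} and the column index set {0, …, n−1} into consecutive nonempty blocks J_0 < J_1 < … < J_{k−1}, and let l and u be nonnegative integers. Suppose that for every i with 1 ≤ i ≤ k−1, the maximal subdiagonal block M(I_i ∪ … ∪ I_{k−1}, J_0 ∪ … ∪ J_{i−1}) has rank at most l and the maximal superdiagonal block M(I_0 ∪ … ∪ I_{i−1}, J_i ∪ … ∪ J_{k−1}) has rank at most u. Then for all integers a, b with 0 ≤ a ≤ b ≤ k−1, the neutered union N = M((I_0 ∪ … ∪ I_{a−1}) ∪ (I_{b+1}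 ∪ … ∪ I_{k−1}), J_a ∪ … ∪ J_b) (the union of the block columns J_a, …, J_b with the rows of the diagonal blocks Σ_a, …, Σ_b removed) has rank at most l + u. -/
open Matrix

lemma aux_funLeft_id {n : Type*} : LinearMap.funLeft ℂ ℂ (id : n → n) = LinearMap.id := rfl

/-- Row reindexing by an equivalence preserves rank. -/
lemma aux_rank_row_equiv {m m' n : Type*} [Fintype n] (A : Matrix m n ℂ) (e : m' ≃ m) :
    (A.submatrix e id).rank = A.rank := by
  have h := Matrix.mulVecLin_submatrix (⇑e) (Equiv.refl n) A
  simp only [Equiv.refl_symm, Equiv.coe_refl, aux_funLeft_id, LinearMap.comp_id] at h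
  rw [Matrix.rank, Matrix.rank, h, LinearMap.range_comp]
  exact LinearEquiv.finrank_map_eq (LinearEquiv.funCongrLeft ℂ ℂ e) _

/-- Row selection does not increase rank. -/
lemma aux_rank_rows_le {m m' n : Type*} [Fintype n] (A : Matrix m n ℂ) (f : m' → m) :
    (A.submatrix f id).rank ≤ A.rank := by
  have h := Matrix.mulVecLin_submatrix f (Equiv.refl n) A
  simp only [Equiv.refl_symm, Equiv.coe_refl, aux_funLeft_id, LinearMap.comp_id] at h
  rw [Matrix.rank, Matrix.rank, h, LinearMap.range_comp]
  exact Submodule.finrank_map_le _ _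

/-- General submatrix does not increase rank. -/
lemma aux_rank_submatrix_le {m m' n n' : Type*} [Fintype m] [Fintype n] [Fintype n']
    (A : Matrix m n ℂ) (f : m' → m) (g : n' → n) :
    (A.submatrix f g).rank ≤ A.rank := by
  have h1 : A.submatrix f g = (A.submatrix id g).submatrix f id := rfl
  have h2 : A.submatrix id g = (Aᵀ.submatrix g id)ᵀ := rfl
  calc (A.submatrix f g).rank ≤ (A.submatrix id g).rank := by rw [h1]; exact aux_rank_rows_le _ f
    _ = (Aᵀ.submatrix g id).rank := by rw [h2, Matrix.rank_transpose]
    _ ≤ Aᵀ.rank := aux_rank_rows_le _ g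
    _ = A.rank := Matrix.rank_transpose A

lemma aux_rank_add_le {m n : Type*} [Fintype m] [Fintype n] (A B : Matrix m n ℂ) :
    (A + B).rank ≤ A.rank + B.rank := by
  rw [Matrix.rank, Matrix.rank, Matrix.rank, Matrix.mulVecLin_add]
  have h : LinearMap.range (A.mulVecLin + B.mulVecLin) ≤
      LinearMap.range A.mulVecLin ⊔ LinearMap.range B.mulVecLin := by
    rintro x ⟨v, rfl⟩
    exact Submodule.add_mem_sup ⟨v, rfl⟩ ⟨v, rfl⟩
  exact (Submodule.finrank_mono h).trans (Submodule.finrank_add_le_finrank_add_finrank _ _)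

lemma aux_rank_fromRows_le {m₁ m₂ n : Type*} [Fintype m₁] [Fintype m₂] [Fintype n]
    [DecidableEq m₁] [DecidableEq m₂]
    (A : Matrix m₁ n ℂ) (B : Matrix m₂ n ℂ) :
    (Matrix.fromRows A B).rank ≤ A.rank + B.rank := by
  have h1 : Matrix.fromRows A B =
      Matrix.fromRows A (0 : Matrix m₂ n ℂ) + Matrix.fromRows (0 : Matrix m₁ n ℂ) B := by
    ext (i | i) j <;> simp
  have h2 : Matrix.fromRows A (0 : Matrix m₂ n ℂ) =
      Matrix.fromRows (1 : Matrix m₁ m₁ ℂ) (0 : Matrix m₂ m₁ ℂ) * A := by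
    rw [Matrix.fromRows_mul, Matrix.one_mul, Matrix.zero_mul]
  have h3 : Matrix.fromRows (0 : Matrix m₁ n ℂ) B =
      Matrix.fromRows (0 : Matrix m₁ m₂ ℂ) (1 : Matrix m₂ m₂ ℂ) * B := by
    rw [Matrix.fromRows_mul, Matrix.one_mul, Matrix.zero_mul]
  calc (Matrix.fromRows A B).rank
      ≤ (Matrix.fromRows A (0 : Matrix m₂ n ℂ)).rank
        + (Matrix.fromRows (0 : Matrix m₁ n ℂ) B).rank := by rw [h1]; exact aux_rank_add_le _ _
    _ ≤ A.rank + B.rank := by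
        gcongr
        · rw [h2]; exact Matrix.rank_mul_le_right _ _
        · rw [h3]; exact Matrix.rank_mul_le_right _ _

/-- Splitting rows by a predicate: rank is at most sum of the two row-group ranks. -/
lemma aux_rank_split {m n : Type*} [Fintype m] [Fintype n] (N : Matrix m n ℂ)
    (D : m → Prop) [DecidablePred D] :
    N.rank ≤ (N.submatrix (fun x : {x // D x} => (x : m)) id).rank
      + (N.submatrix (fun x : {x // ¬ D x} => (x : m)) id).rank := by
  classical
  have h : N.submatrix (⇑(Equiv.sumCompl D)) id =
      Matrix.fromRows (N.submatrix (fun x : {x // D x} => (x : m)) id)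
        (N.submatrix (fun x : {x // ¬ D x} => (x : m)) id) := by
    ext (i | i) j <;> rfl
  calc N.rank = (N.submatrix (⇑(Equiv.sumCompl D)) id).rank :=
        (aux_rank_row_equiv N (Equiv.sumCompl D)).symm
    _ ≤ _ := by rw [h]; exact aux_rank_fromRows_le _ _



/-- Part (i) of Theorem 4.6 of the paper: every `(l, u)`-quasiseparable matrix
is an `(l + u)`-HSS matrix. The row index set `{0, …, m-1}` is partitioned into
consecutive nonempty blocks `I_q = [r q, r (q+1))` and the column index set
into `J_q = [c q, c (q+1))`, `q = 0, …, k-1`. If every maximal subdiagonal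
block has rank at most `l` and every maximal superdiagonal block has rank at
most `u`, then every neutered union (the union of consecutive block columns
`J_a, …, J_b` with the rows of the diagonal blocks `Σ_a, …, Σ_b` removed) has
rank at most `l + u`. -/
theorem quasiseparable_is_hss (m n k : ℕ) (hk : 1 ≤ k)
    (r : ℕ → ℕ) (hr0 : r 0 = 0) (hrk : r k = m)
    (hrmono : ∀ a b : ℕ, a < b → b ≤ k → r a < r b)
    (c : ℕ → ℕ) (hc0 : c 0 = 0) (hck : c k = n)
    (hcmono : ∀ a b : ℕ, a < b → b ≤ k → c a < c b)
    (M : Matrix (Fin m) (Fin n) ℂ) (l u : ℕ)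
    (hsub : ∀ i : ℕ, 1 ≤ i → i ≤ k - 1 →
      (M.submatrix (fun x : {x : Fin m // r i ≤ (x : ℕ)} => (x : Fin m))
        (fun y : {y : Fin n // (y : ℕ) < c i} => (y : Fin n))).rank ≤ l)
    (hsuper : ∀ i : ℕ, 1 ≤ i → i ≤ k - 1 →
      (M.submatrix (fun x : {x : Fin m // (x : ℕ) < r i} => (x : Fin m))
        (fun y : {y : Fin n // c i ≤ (y : ℕ)} => (y : Fin n))).rank ≤ u) :
    ∀ a b : ℕ, a ≤ b → b ≤ k - 1 →
      (M.submatrix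
        (fun x : {x : Fin m // (x : ℕ) < r a ∨ r (b + 1) ≤ (x : ℕ)} => (x : Fin m))
        (fun y : {y : Fin n // c a ≤ (y : ℕ) ∧ (y : ℕ) < c (b + 1)} => (y : Fin n))).rank
        ≤ l + u := by
  intro a b hab hbk
  classical
  have hak : a ≤ k - 1 := le_trans hab hbk
  set T := {x : Fin m // (x : ℕ) < r a ∨ r (b + 1) ≤ (x : ℕ)} with hT
  set N := M.submatrix
      (fun x : T => (x : Fin m))
      (fun y : {y : Fin n // c a ≤ (y : ℕ) ∧ (y : ℕ) < c (b + 1)} => (y : Fin n)) with hN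
  set D : T → Prop := fun t => ((t : Fin m) : ℕ) < r a with hD
  have key := aux_rank_split N D
  have h1 : (N.submatrix (fun x : {x : T // D x} => (x : T)) id).rank ≤ u := by
    by_cases ha : a = 0
    · have hE : IsEmpty {x : T // D x} := ⟨fun x => by
        have := x.2
        simp only [hD, ha, hr0] at this
        omega⟩
      calc (N.submatrix (fun x : {x : T // D x} => (x : T)) id).rank
          ≤ Fintype.card {x : T // D x} := Matrix.rank_le_card_height _
        _ = 0 := Fintype.card_eq_zero
        _ ≤ u := Nat.zero_le u
    · have ha1 : 1 ≤ a := Nat.one_le_iff_ne_zero.mpr ha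
      have heq : N.submatrix (fun x : {x : T // D x} => (x : T)) id =
          (M.submatrix (fun x : {x : Fin m // (x : ℕ) < r a} => (x : Fin m))
            (fun y : {y : Fin n // c a ≤ (y : ℕ)} => (y : Fin n))).submatrix
          (fun x : {x : T // D x} => (⟨((x : T) : Fin m), x.2⟩ : {x : Fin m // (x : ℕ) < r a}))
          (fun y : {y : Fin n // c a ≤ (y : ℕ) ∧ (y : ℕ) < c (b + 1)} =>
            (⟨(y : Fin n), y.2.1⟩ : {y : Fin n // c a ≤ (y : ℕ)})) := rfl
      rw [heq]
      exact le_trans (aux_rank_submatrix_le _ _ _) (hsuper a ha1 hak)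
  have h2 : (N.submatrix (fun x : {x : T // ¬ D x} => (x : T)) id).rank ≤ l := by
    by_cases hb : b + 1 ≤ k - 1
    · have heq : N.submatrix (fun x : {x : T // ¬ D x} => (x : T)) id =
          (M.submatrix (fun x : {x : Fin m // r (b + 1) ≤ (x : ℕ)} => (x : Fin m))
            (fun y : {y : Fin n // (y : ℕ) < c (b + 1)} => (y : Fin n))).submatrix
          (fun x : {x : T // ¬ D x} =>
            (⟨((x : T) : Fin m), (x : T).2.resolve_left x.2⟩ :
              {x : Fin m // r (b + 1) ≤ (x : ℕ)}))
          (fun y : {y : Fin n // c a ≤ (y : ℕ) ∧ (y : ℕ) < c (b + 1)} =>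
            (⟨(y : Fin n), y.2.2⟩ : {y : Fin n // (y : ℕ) < c (b + 1)})) := rfl
      rw [heq]
      exact le_trans (aux_rank_submatrix_le _ _ _) (hsub (b + 1) (Nat.le_add_left 1 b) hb)
    · have hbk1 : b + 1 = k := by omega
      have hE : IsEmpty {x : T // ¬ D x} := ⟨fun x => by
        have h := (x : T).2.resolve_left x.2
        have h2 : r (b + 1) = m := by rw [hbk1]; exact hrk
        have h3 : (((x : T) : Fin m) : ℕ) < m := ((x : T) : Fin m).isLt
        omega⟩
      calc (N.submatrix (fun x : {x : T // ¬ D x} => (x : T)) id).rank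
          ≤ Fintype.card {x : T // ¬ D x} := Matrix.rank_le_card_height _
        _ = 0 := Fintype.card_eq_zero
        _ ≤ l := Nat.zero_le l
  omega
end
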